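/- arXiv:1812.09120 — 9 statements merged into one kernel-verified Lean document; each statement's English description precedes it below -/
import Mathlib

section
/- For every q ≥ 0 and all binary strings X, Y of length 2^q, the edit (Levenshtein) distance between τ(X) and τ(Y) is equal to the Hamming distance between X and Y. (Theorem 2.2, correctness of the stoppers transform.) -/
/-- Cost structure for Levenshtein distance (as in the older Mathlib). -/
structure Levenshtein.Cost (α β δ : Type*) where
  delete : α → δ
  insert : β → δ
  substitute : α → β → δ

/-- Unit costs (as in the older Mathlib). -/
def Levenshtein.defaultCost {α : Type*} [DecidableEq α] : Levenshtein.Cost α α ℕ where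
  delete _ := 1
  insert _ := 1
  substitute a b := if a = b then 0 else 1

/-- Auxiliary step of the Levenshtein computation (as in the older Mathlib). -/
def Levenshtein.impl {α β δ : Type*} [AddZeroClass δ] [Min δ] (C : Levenshtein.Cost α β δ)
    (xs : List α) (y : β) (d : {r : List δ // 0 < r.length}) : {r : List δ // 0 < r.length} :=
  let ⟨ds, w⟩ := d
  xs.zip (ds.zip ds.tail) |>.foldr
    (init := ⟨[C.insert y + ds.getLast (List.ne_nil_of_length_pos w)], by simp⟩)
    (fun ⟨x, d₀, d₁⟩ ⟨r, w⟩ =>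
      ⟨min (C.delete x + r[0]) (min (C.insert y + d₀) (C.substitute x y + d₁)) :: r, by simp⟩)

/-- Suffix Levenshtein distances (as in the older Mathlib). -/
def suffixLevenshtein {α β δ : Type*} [AddZeroClass δ] [Min δ] (C : Levenshtein.Cost α β δ)
    (xs : List α) (ys : List β) : {r : List δ // 0 < r.length} :=
  ys.foldr
    (Levenshtein.impl C xs)
    (xs.foldr (init := ⟨[0], by simp⟩) (fun a ⟨r, w⟩ => ⟨(C.delete a + r[0]) :: r, by simp⟩))

/-- Levenshtein distance (as in the older Mathlib). -/
def levenshtein {α β δ : Type*} [AddZeroClass δ] [Min δ] (C : Levenshtein.Cost α β δ)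
    (xs : List α) (ys : List β) : δ :=
  let ⟨r, w⟩ := suffixLevenshtein C xs ys
  r[0]

/-- Hamming distance between two (equal-length) lists: the number of
positions at which they differ. -/
def hammingL {α : Type*} [DecidableEq α] (u v : List α) : ℕ :=
  (u.zip v).countP fun p => decide (p.1 ≠ p.2)

/-- The stoppers transform.  On a binary string `X` of length `2 ^ q`:
if `q = 0` then `τ X = X`; otherwise `τ X = τ X₁ ++ S_q ++ τ X₂`, where
`X₁, X₂` are the two halves of `X` and the stopper `S_q` consists of the
symbol `c_q = q + 1` repeated `6 * 2 ^ q` times. -/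
def tau : ℕ → List ℕ → List ℕ
  | 0, X => X
  | (q + 1), X =>
      tau q (X.take (2 ^ q)) ++ List.replicate (6 * 2 ^ (q + 1)) (q + 2) ++
        tau q (X.drop (2 ^ q))

section LevPort
variable {α β δ : Type*} [AddZeroClass δ] [Min δ] {C : Levenshtein.Cost α β δ}

@[simp] theorem Levenshtein.defaultCost_delete {γ : Type*} [DecidableEq γ] (a : γ) :
    (Levenshtein.defaultCost : Levenshtein.Cost γ γ ℕ).delete a = 1 := rfl
@[simp] theorem Levenshtein.defaultCost_insert {γ : Type*} [DecidableEq γ] (a : γ) :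
    (Levenshtein.defaultCost : Levenshtein.Cost γ γ ℕ).insert a = 1 := rfl
@[simp] theorem Levenshtein.defaultCost_substitute {γ : Type*} [DecidableEq γ] (a b : γ) :
    (Levenshtein.defaultCost : Levenshtein.Cost γ γ ℕ).substitute a b = if a = b then 0 else 1 := rfl

theorem levPort_gz (l : List δ) (h : 0 < l.length) : l[0]'h = l.headD 0 := by
  cases l with
  | nil => simp at h
  | cons a l => rfl

theorem levPort_lev (C : Levenshtein.Cost α β δ) (xs : List α) (ys : List β) :
    levenshtein C xs ys = (suffixLevenshtein C xs ys).1.headD 0 := by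
  rw [← levPort_gz _ (suffixLevenshtein C xs ys).2]
  rfl

theorem levPort_impl_cons (x : α) (xs : List α) (y : β) (d d1 : δ) (ds : List δ) (w w') :
    (Levenshtein.impl C (x :: xs) y ⟨d :: d1 :: ds, w⟩).1 =
      min (C.delete x + (Levenshtein.impl C xs y ⟨d1 :: ds, w'⟩).1.headD 0)
        (min (C.insert y + d) (C.substitute x y + d1)) ::
        (Levenshtein.impl C xs y ⟨d1 :: ds, w'⟩).1 := by
  simp only [Levenshtein.impl, List.tail_cons, List.zip_cons_cons, List.foldr_cons, levPort_gz]
  rfl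

theorem levPort_impl_length (xs : List α) (y : β) (d : {r : List δ // 0 < r.length})
    (w : d.1.length = xs.length + 1) :
    (Levenshtein.impl C xs y d).1.length = xs.length + 1 := by
  induction xs generalizing d with
  | nil => rfl
  | cons x xs ih =>
    rcases d with ⟨_ | ⟨a, _ | ⟨b, l⟩⟩, hl⟩
    · simp at hl
    · simp at w
    · rw [levPort_impl_cons (w' := by simp)]
      simp only [List.length_cons]
      rw [ih ⟨_, _⟩ (by simpa using w)]

theorem levPort_suffix_length (xs : List α) (ys : List β) :
    (suffixLevenshtein C xs ys).1.length = xs.length + 1 := by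
  induction ys with
  | nil =>
    dsimp [suffixLevenshtein]
    induction xs with
    | nil => rfl
    | cons _ xs ih => simp_all
  | cons y ys ih =>
    dsimp [suffixLevenshtein]
    rw [levPort_impl_length]
    exact ih

theorem levPort_suffix_cons₁ (x : α) (xs : List α) (ys : List β) :
    (suffixLevenshtein C (x :: xs) ys).1 =
      levenshtein C (x :: xs) ys :: (suffixLevenshtein C xs ys).1 := by
  induction ys with
  | nil => rfl
  | cons y ys ih =>
    rw [levPort_lev C (x :: xs) (y :: ys)]
    show (Levenshtein.impl C (x :: xs) y (suffixLevenshtein C (x :: xs) ys)).1 =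
      (Levenshtein.impl C (x :: xs) y (suffixLevenshtein C (x :: xs) ys)).1.headD 0 ::
        (Levenshtein.impl C xs y (suffixLevenshtein C xs ys)).1
    have e : suffixLevenshtein C (x :: xs) ys =
        ⟨levenshtein C (x :: xs) ys :: (suffixLevenshtein C xs ys).1, by simp⟩ := Subtype.ext ih
    rw [e]
    obtain ⟨l, hl'⟩ := suffixLevenshtein C xs ys
    rcases l with _ | ⟨a, l⟩
    · simp at hl'
    · rw [levPort_impl_cons (w' := hl')]
      rfl

@[simp] theorem levenshtein_nil_nil : levenshtein C [] [] = 0 := rfl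

@[simp] theorem levenshtein_nil_cons (y : β) (ys : List β) :
    levenshtein C [] (y :: ys) = C.insert y + levenshtein C [] ys := by
  have h := levPort_suffix_length (C := C) [] ys
  rw [levPort_lev C [] (y :: ys), levPort_lev C [] ys]
  show (Levenshtein.impl C [] y (suffixLevenshtein C [] ys)).1.headD 0 =
    C.insert y + (suffixLevenshtein C [] ys).1.headD 0
  generalize suffixLevenshtein C [] ys = S at h ⊢
  obtain ⟨l, hl⟩ := S
  rcases l with _ | ⟨a, _ | ⟨b, l⟩⟩
  · simp at hl
  · rfl
  · simp at h

@[simp] theorem levenshtein_cons_nil (x : α) (xs : List α) :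
    levenshtein C (x :: xs) [] = C.delete x + levenshtein C xs [] := rfl

@[simp] theorem levenshtein_cons_cons (x : α) (xs : List α) (y : β) (ys : List β) :
    levenshtein C (x :: xs) (y :: ys) =
      min (C.delete x + levenshtein C xs (y :: ys))
        (min (C.insert y + levenshtein C (x :: xs) ys)
          (C.substitute x y + levenshtein C xs ys)) := by
  have h1 := levPort_suffix_cons₁ (C := C) x xs ys
  rw [levPort_lev C (x :: xs) (y :: ys), levPort_lev C xs (y :: ys), levPort_lev C xs ys]
  show (Levenshtein.impl C (x :: xs) y (suffixLevenshtein C (x :: xs) ys)).1.headD 0 =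
    min (C.delete x + (Levenshtein.impl C xs y (suffixLevenshtein C xs ys)).1.headD 0)
      (min (C.insert y + levenshtein C (x :: xs) ys)
        (C.substitute x y + (suffixLevenshtein C xs ys).1.headD 0))
  have e : suffixLevenshtein C (x :: xs) ys =
      ⟨levenshtein C (x :: xs) ys :: (suffixLevenshtein C xs ys).1, by simp⟩ := Subtype.ext h1
  rw [e]
  obtain ⟨l, hl'⟩ := suffixLevenshtein C xs ys
  rcases l with _ | ⟨a, l⟩
  · simp at hl'
  · rw [levPort_impl_cons (w' := hl')]
    rfl

end LevPort

open Levenshtein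

local notation "lev" => levenshtein (Levenshtein.defaultCost : Levenshtein.Cost ℕ ℕ ℕ)

lemma lev_nil_left (v : List ℕ) : lev [] v = v.length := by
  induction v with
  | nil => simp [levenshtein_nil_nil]
  | cons a l ih => rw [levenshtein_nil_cons, ih]; simp; omega

lemma lev_nil_right (v : List ℕ) : lev v [] = v.length := by
  induction v with
  | nil => simp [levenshtein_nil_nil]
  | cons a l ih => rw [levenshtein_cons_nil, ih]; simp; omega

lemma lev_le_one_add_left (x : ℕ) (u v : List ℕ) :
    lev (x :: u) v ≤ 1 + lev u v := by
  cases v with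
  | nil => rw [levenshtein_cons_nil]; simp
  | cons y ys =>
      rw [levenshtein_cons_cons]
      exact le_trans (min_le_left _ _) (by simp)

lemma lev_le_one_add_right (y : ℕ) (u v : List ℕ) :
    lev u (y :: v) ≤ 1 + lev u v := by
  cases u with
  | nil => rw [levenshtein_nil_cons]; simp
  | cons x xs =>
      rw [levenshtein_cons_cons]
      refine le_trans (le_trans (min_le_right _ _) (min_le_left _ _)) (by simp)

lemma lev_le_sub (x y : ℕ) (u v : List ℕ) :
    lev (x :: u) (y :: v) ≤ (if x = y then 0 else 1) + lev u v := by
  rw [levenshtein_cons_cons]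
  refine le_trans (le_trans (min_le_right _ _) (min_le_right _ _)) (by simp)

lemma lev_self (u : List ℕ) : lev u u = 0 := by
  induction u with
  | nil => simp [levenshtein_nil_nil]
  | cons x xs ih =>
      refine le_antisymm ?_ (Nat.zero_le _)
      calc lev (x :: xs) (x :: xs) ≤ (if x = x then 0 else 1) + lev xs xs :=
            lev_le_sub _ _ _ _
      _ = 0 := by simp [ih]

/-- filtering both lists cannot increase Levenshtein distance -/
lemma lev_filter_le (p : ℕ → Bool) :
    ∀ n u v, u.length + v.length ≤ n →
      lev (u.filter p) (v.filter p) ≤ lev u v := by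
  intro n
  induction n with
  | zero =>
      intro u v h
      have hu : u = [] := by cases u <;> simp_all
      have hv : v = [] := by cases v <;> simp_all
      simp [hu, hv]
  | succ n IH =>
      intro u v h
      match u, v with
      | [], v =>
          simp only [List.filter_nil, lev_nil_left]
          exact List.length_filter_le _ _
      | u, [] =>
          simp only [List.filter_nil, lev_nil_right]
          exact List.length_filter_le _ _
      | x :: u', y :: v' =>
          have h1 : u'.length + (y :: v').length ≤ n := by simp at h ⊢; omega
          have h2 : (x :: u').length + v'.length ≤ n := by simp at h ⊢; omega
          have h3 : u'.length + v'.length ≤ n := by simp at h ⊢; omega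
          rw [levenshtein_cons_cons]
          have I1 := IH u' (y :: v') h1
          have I2 := IH (x :: u') v' h2
          have I3 := IH u' v' h3
          refine le_min ?_ (le_min ?_ ?_)
          · have : lev ((x :: u').filter p) ((y :: v').filter p) ≤
                1 + lev (u'.filter p) ((y :: v').filter p) := by
              by_cases hx : p x
              · simp only [List.filter_cons, hx, if_pos]
                exact lev_le_one_add_left x _ _
              · simp only [List.filter_cons, hx, Bool.false_eq_true, if_false]
                omega
            simp only [Levenshtein.defaultCost_delete]
            omega
          · have : lev ((x :: u').filter p) ((y :: v').filter p) ≤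
                1 + lev ((x :: u').filter p) (v'.filter p) := by
              by_cases hy : p y
              · simp only [List.filter_cons, hy, if_pos]
                exact lev_le_one_add_right y _ _
              · simp only [List.filter_cons, hy, Bool.false_eq_true, if_false]
                omega
            simp only [Levenshtein.defaultCost_insert]
            omega
          · by_cases hxy : x = y
            · subst hxy
              have : lev ((x :: u').filter p) ((x :: v').filter p) ≤
                  lev (u'.filter p) (v'.filter p) := by
                by_cases hx : p x
                · simp only [List.filter_cons, hx, if_pos]
                  have := lev_le_sub x x (u'.filter p) (v'.filter p)
                  simpa using this
                · simp only [List.filter_cons, hx, Bool.false_eq_true, if_false]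
                  exact le_rfl
              simp only [Levenshtein.defaultCost_substitute, if_pos rfl]
              omega
            · have : lev ((x :: u').filter p) ((y :: v').filter p) ≤
                  1 + lev (u'.filter p) (v'.filter p) := by
                by_cases hx : p x <;> by_cases hy : p y <;>
                    simp only [List.filter_cons, hx, hy, if_pos, Bool.false_eq_true, if_false]
                · have := lev_le_sub x y (u'.filter p) (v'.filter p)
                  simp only [hxy, if_false] at this
                  exact this
                · have := lev_le_one_add_left x (u'.filter p) (v'.filter p)
                  omega
                · have := lev_le_one_add_right y (u'.filter p) (v'.filter p)
                  omega
                · omega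
              simp only [Levenshtein.defaultCost_substitute, hxy, if_false]
              omega

/-- subadditivity of Levenshtein distance under append -/
lemma lev_append_le :
    ∀ n u u', u.length + u'.length ≤ n → ∀ v v' : List ℕ,
      lev (u ++ v) (u' ++ v') ≤ lev u u' + lev v v' := by
  intro n
  induction n with
  | zero =>
      intro u u' h v v'
      have hu : u = [] := by cases u <;> simp_all
      have hv : u' = [] := by cases u' <;> simp_all
      simp [hu, hv, levenshtein_nil_nil]
  | succ n IH =>
      intro u u' h v v'
      match u, u' with
      | [], [] => simp [levenshtein_nil_nil]
      | [], y :: u₂ =>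
          have e : lev v (y :: (u₂ ++ v')) ≤ 1 + lev v (u₂ ++ v') := lev_le_one_add_right _ _ _
          have I := IH [] u₂ (by simp at h ⊢; omega) v v'
          rw [levenshtein_nil_cons]
          simp only [List.nil_append, List.cons_append] at *
          simp only [Levenshtein.defaultCost_insert]
          omega
      | x :: u₂, [] =>
          have e : lev (x :: (u₂ ++ v)) v' ≤ 1 + lev (u₂ ++ v) v' := lev_le_one_add_left _ _ _
          have I := IH u₂ [] (by simp at h ⊢; omega) v v'
          rw [levenshtein_cons_nil]
          simp only [List.nil_append, List.cons_append] at *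
          simp only [Levenshtein.defaultCost_delete]
          omega
      | x :: u₂, y :: u₂' =>
          rw [levenshtein_cons_cons]
          have I1 := IH u₂ (y :: u₂') (by simp at h ⊢; omega) v v'
          have I2 := IH (x :: u₂) u₂' (by simp at h ⊢; omega) v v'
          have I3 := IH u₂ u₂' (by simp at h ⊢; omega) v v'
          have e1 : lev ((x :: u₂) ++ v) ((y :: u₂') ++ v') ≤
              1 + lev (u₂ ++ v) ((y :: u₂') ++ v') := by
            simpa using lev_le_one_add_left x (u₂ ++ v) ((y :: u₂') ++ v')
          have e2 : lev ((x :: u₂) ++ v) ((y :: u₂') ++ v') ≤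
              1 + lev ((x :: u₂) ++ v) (u₂' ++ v') := by
            simpa using lev_le_one_add_right y ((x :: u₂) ++ v) (u₂' ++ v')
          have e3 : lev ((x :: u₂) ++ v) ((y :: u₂') ++ v') ≤
              (if x = y then 0 else 1) + lev (u₂ ++ v) (u₂' ++ v') := by
            simpa using lev_le_sub x y (u₂ ++ v) (u₂' ++ v')
          simp only [Levenshtein.defaultCost_delete, Levenshtein.defaultCost_insert,
            Levenshtein.defaultCost_substitute] at *
          by_cases hxy : x = y <;> simp only [hxy, if_pos, if_false] at * <;> omega

set_option maxHeartbeats 2000000 in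
/-- key lower bound: a long run of a fresh symbol `c` on both sides forces the
edit distance to split, unless it is at least the run length -/
lemma lev_master (c : ℕ) (v v' : List ℕ) (hv : c ∉ v) (hv' : c ∉ v') :
    ∀ n u u' k m, u.length + u'.length + k + m ≤ n → c ∉ u → c ∉ u' →
      min k (min m (lev u u' + lev v v')) ≤
        lev (u ++ List.replicate k c ++ v) (u' ++ List.replicate m c ++ v') := by
  intro n
  induction n with
  | zero =>
      intro u u' k m h hu hu'
      have : k = 0 := by omega
      simp [this]
  | succ n IH =>
      intro u u' k m h hu hu'
      match u, u' with
      | x :: u₂, y :: u₂' =>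
          have hu₂ : c ∉ u₂ := fun hc => hu (List.mem_cons_of_mem _ hc)
          have hu₂' : c ∉ u₂' := fun hc => hu' (List.mem_cons_of_mem _ hc)
          have I1 := IH u₂ (y :: u₂') k m (by simp at h ⊢; omega) hu₂ hu'
          have I2 := IH (x :: u₂) u₂' k m (by simp at h ⊢; omega) hu hu₂'
          have I3 := IH u₂ u₂' k m (by simp at h ⊢; omega) hu₂ hu₂'
          have e1 : lev (x :: u₂) (y :: u₂') ≤ 1 + lev u₂ (y :: u₂') :=
            lev_le_one_add_left _ _ _
          have e2 : lev (x :: u₂) (y :: u₂') ≤ 1 + lev (x :: u₂) u₂' :=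
            lev_le_one_add_right _ _ _
          have e3 : lev (x :: u₂) (y :: u₂') ≤ (if x = y then 0 else 1) + lev u₂ u₂' :=
            lev_le_sub _ _ _ _
          have expand : lev ((x :: u₂) ++ List.replicate k c ++ v)
              ((y :: u₂') ++ List.replicate m c ++ v') =
              min (1 + lev (u₂ ++ List.replicate k c ++ v)
                    ((y :: u₂') ++ List.replicate m c ++ v'))
                (min (1 + lev ((x :: u₂) ++ List.replicate k c ++ v)
                    (u₂' ++ List.replicate m c ++ v'))
                  ((if x = y then 0 else 1) + lev (u₂ ++ List.replicate k c ++ v)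
                    (u₂' ++ List.replicate m c ++ v'))) := by
            simp only [List.cons_append]
            rw [levenshtein_cons_cons]
            simp
          rw [expand]
          by_cases hxy : x = y
          · rw [if_pos hxy] at e3 ⊢; omega
          · rw [if_neg hxy] at e3 ⊢; omega
      | [], y :: u₂' =>
          match k with
          | 0 => simp
          | k' + 1 =>
              have hyc : ¬ (c = y) := fun hc => hu' (by simp [hc])
              have hu₂' : c ∉ u₂' := fun hc => hu' (List.mem_cons_of_mem _ hc)
              have I1 := IH [] (y :: u₂') k' m (by simp at h ⊢; omega) hu hu'
              have I2 := IH [] u₂' (k' + 1) m (by simp at h ⊢; omega) hu hu₂'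
              have I3 := IH [] u₂' k' m (by simp at h ⊢; omega) hu hu₂'
              have expand : lev (([] : List ℕ) ++ List.replicate (k' + 1) c ++ v)
                  ((y :: u₂') ++ List.replicate m c ++ v') =
                  min (1 + lev (([] : List ℕ) ++ List.replicate k' c ++ v)
                        ((y :: u₂') ++ List.replicate m c ++ v'))
                    (min (1 + lev (([] : List ℕ) ++ List.replicate (k' + 1) c ++ v)
                        (u₂' ++ List.replicate m c ++ v'))
                      (1 + lev (([] : List ℕ) ++ List.replicate k' c ++ v)
                        (u₂' ++ List.replicate m c ++ v'))) := by
                simp only [List.nil_append, List.replicate_succ, List.cons_append]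
                rw [levenshtein_cons_cons]
                simp [hyc]
              rw [expand]
              have e0 : lev ([] : List ℕ) (y :: u₂') = 1 + lev ([] : List ℕ) u₂' := by
                simp [lev_nil_left]
              omega
      | x :: u₂, [] =>
          match m with
          | 0 => simp
          | m' + 1 =>
              have hxc : ¬ (x = c) := fun hc => hu (by simp [hc])
              have hu₂ : c ∉ u₂ := fun hc => hu (List.mem_cons_of_mem _ hc)
              have I1 := IH u₂ [] k (m' + 1) (by simp at h ⊢; omega) hu₂ hu'
              have I2 := IH (x :: u₂) [] k m' (by simp at h ⊢; omega) hu hu'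
              have I3 := IH u₂ [] k m' (by simp at h ⊢; omega) hu₂ hu'
              have expand : lev ((x :: u₂) ++ List.replicate k c ++ v)
                  (([] : List ℕ) ++ List.replicate (m' + 1) c ++ v') =
                  min (1 + lev (u₂ ++ List.replicate k c ++ v)
                        (([] : List ℕ) ++ List.replicate (m' + 1) c ++ v'))
                    (min (1 + lev ((x :: u₂) ++ List.replicate k c ++ v)
                        (([] : List ℕ) ++ List.replicate m' c ++ v'))
                      (1 + lev (u₂ ++ List.replicate k c ++ v)
                        (([] : List ℕ) ++ List.replicate m' c ++ v'))) := by
                simp only [List.nil_append, List.replicate_succ, List.cons_append]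
                rw [levenshtein_cons_cons]
                simp [hxc]
              rw [expand]
              have e0 : lev (x :: u₂) ([] : List ℕ) = 1 + lev u₂ ([] : List ℕ) := by
                simp [lev_nil_right]
              omega
      | [], [] =>
          have filt : lev v v' ≤
              lev (([] : List ℕ) ++ List.replicate k c ++ v)
                (([] : List ℕ) ++ List.replicate m c ++ v') := by
            set p : ℕ → Bool := fun a => !decide (a = c) with hp
            have := lev_filter_le p
              ((([] : List ℕ) ++ List.replicate k c ++ v).length +
                (([] : List ℕ) ++ List.replicate m c ++ v').length)
              (([] : List ℕ) ++ List.replicate k c ++ v)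
              (([] : List ℕ) ++ List.replicate m c ++ v') le_rfl
            have fv : v.filter p = v :=
              List.filter_eq_self.2 (fun a ha => by simp [hp]; exact fun hc => hv (hc ▸ ha))
            have fv' : v'.filter p = v' :=
              List.filter_eq_self.2 (fun a ha => by simp [hp]; exact fun hc => hv' (hc ▸ ha))
            have frep : ∀ j, (List.replicate j c).filter p = [] := by
              intro j
              apply List.filter_eq_nil_iff.2
              intro a ha
              simp [hp, List.eq_of_mem_replicate ha]
            rw [List.nil_append, List.nil_append, List.filter_append, List.filter_append,
              fv, fv', frep, frep, List.nil_append, List.nil_append] at this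
            simpa using this
          have : lev ([] : List ℕ) ([] : List ℕ) = 0 := by simp
          omega

lemma tau_mem_lt (q : ℕ) : ∀ X : List ℕ, (∀ x ∈ X, x = 0 ∨ x = 1) →
    ∀ z ∈ tau q X, z < q + 2 := by
  induction q with
  | zero =>
      intro X hb z hz
      rcases hb z hz with h | h <;> omega
  | succ q IH =>
      intro X hb z hz
      simp only [tau, List.mem_append] at hz
      rcases hz with (hz | hz) | hz
      · have := IH (X.take (2 ^ q)) (fun x hx => hb x (List.take_subset _ _ hx)) z hz
        omega
      · have := List.eq_of_mem_replicate hz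
        omega
      · have := IH (X.drop (2 ^ q)) (fun x hx => hb x (List.drop_subset _ _ hx)) z hz
        omega

lemma hammingL_le_length (u v : List ℕ) : hammingL u v ≤ u.length := by
  calc hammingL u v ≤ (u.zip v).length := List.countP_le_length
  _ ≤ u.length := by rw [List.length_zip]; omega

lemma hammingL_append (a b a' b' : List ℕ) (h : a.length = a'.length) :
    hammingL (a ++ b) (a' ++ b') = hammingL a a' + hammingL b b' := by
  unfold hammingL
  rw [List.zip_append h, List.countP_append]

/-- Theorem 2.2 (correctness of the stoppers transform): for binary strings
`X, Y` of length `2 ^ q`, the edit (Levenshtein) distance between `τ X` and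
`τ Y` equals the Hamming distance between `X` and `Y`. -/
theorem stoppers_transform_edit_eq_hamming (q : ℕ) (X Y : List ℕ)
    (hX : X.length = 2 ^ q) (hY : Y.length = 2 ^ q)
    (hXbin : ∀ x ∈ X, x = 0 ∨ x = 1) (hYbin : ∀ y ∈ Y, y = 0 ∨ y = 1) :
    levenshtein Levenshtein.defaultCost (tau q X) (tau q Y) = hammingL X Y := by
  induction q generalizing X Y with
  | zero =>
      simp only [pow_zero] at hX hY
      obtain ⟨x, rfl⟩ := List.length_eq_one_iff.mp hX
      obtain ⟨y, rfl⟩ := List.length_eq_one_iff.mp hY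
      have e1 : lev [] [y] = 1 := by rw [lev_nil_left]; rfl
      have e2 : lev [x] [] = 1 := by rw [lev_nil_right]; rfl
      have e3 : lev ([] : List ℕ) [] = 0 := levenshtein_nil_nil
      have expand : tau 0 [x] = [x] := rfl
      have expand' : tau 0 [y] = [y] := rfl
      rw [expand, expand', levenshtein_cons_cons, e1, e2, e3]
      simp only [Levenshtein.defaultCost_delete, Levenshtein.defaultCost_insert,
        Levenshtein.defaultCost_substitute]
      have hh : hammingL [x] [y] = if x = y then 0 else 1 := by
        by_cases hxy : x = y <;> simp [hammingL, hxy]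
      rw [hh]
      by_cases hxy : x = y
      · simp only [if_pos hxy]; omega
      · simp only [if_neg hxy]; omega
  | succ q IH =>
      have h2q : 2 ^ q ≤ 2 ^ (q + 1) := Nat.pow_le_pow_right (by norm_num) (by omega)
      have hX1 : (X.take (2 ^ q)).length = 2 ^ q := by
        rw [List.length_take, hX]; omega
      have hX2 : (X.drop (2 ^ q)).length = 2 ^ q := by
        rw [List.length_drop, hX]; rw [pow_succ] at *; omega
      have hY1 : (Y.take (2 ^ q)).length = 2 ^ q := by
        rw [List.length_take, hY]; omega
      have hY2 : (Y.drop (2 ^ q)).length = 2 ^ q := by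
        rw [List.length_drop, hY]; rw [pow_succ] at *; omega
      have bX1 : ∀ x ∈ X.take (2 ^ q), x = 0 ∨ x = 1 :=
        fun x hx => hXbin x (List.take_subset _ _ hx)
      have bX2 : ∀ x ∈ X.drop (2 ^ q), x = 0 ∨ x = 1 :=
        fun x hx => hXbin x (List.drop_subset _ _ hx)
      have bY1 : ∀ y ∈ Y.take (2 ^ q), y = 0 ∨ y = 1 :=
        fun y hy => hYbin y (List.take_subset _ _ hy)
      have bY2 : ∀ y ∈ Y.drop (2 ^ q), y = 0 ∨ y = 1 :=
        fun y hy => hYbin y (List.drop_subset _ _ hy)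
      have I1 := IH _ _ hX1 hY1 bX1 bY1
      have I2 := IH _ _ hX2 hY2 bX2 bY2
      set A := tau q (X.take (2 ^ q)) with hA
      set B := tau q (X.drop (2 ^ q)) with hB
      set A' := tau q (Y.take (2 ^ q)) with hA'
      set B' := tau q (Y.drop (2 ^ q)) with hB'
      set c : ℕ := q + 2 with hc
      set k : ℕ := 6 * 2 ^ (q + 1) with hk
      have hcA : c ∉ A := fun h => by have := tau_mem_lt q _ bX1 c h; omega
      have hcB : c ∉ B := fun h => by have := tau_mem_lt q _ bX2 c h; omega
      have hcA' : c ∉ A' := fun h => by have := tau_mem_lt q _ bY1 c h; omega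
      have hcB' : c ∉ B' := fun h => by have := tau_mem_lt q _ bY2 c h; omega
      have expand : tau (q + 1) X = A ++ List.replicate k c ++ B := rfl
      have expand' : tau (q + 1) Y = A' ++ List.replicate k c ++ B' := rfl
      have hham : hammingL X Y = hammingL (X.take (2 ^ q)) (Y.take (2 ^ q)) +
          hammingL (X.drop (2 ^ q)) (Y.drop (2 ^ q)) := by
        conv_lhs => rw [← List.take_append_drop (2 ^ q) X, ← List.take_append_drop (2 ^ q) Y]
        exact hammingL_append _ _ _ _ (by rw [hX1, hY1])
      -- upper bound
      have upper : lev (A ++ List.replicate k c ++ B) (A' ++ List.replicate k c ++ B') ≤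
          lev A A' + lev B B' := by
        calc lev (A ++ List.replicate k c ++ B) (A' ++ List.replicate k c ++ B') ≤
            lev (A ++ List.replicate k c) (A' ++ List.replicate k c) + lev B B' :=
              lev_append_le _ _ _ le_rfl _ _
        _ ≤ (lev A A' + lev (List.replicate k c) (List.replicate k c)) + lev B B' := by
              have := lev_append_le (A.length + A'.length) A A' le_rfl
                (List.replicate k c) (List.replicate k c)
              omega
        _ = lev A A' + lev B B' := by rw [lev_self]; omega
      -- lower bound
      have lower := lev_master c B B' hcB hcB'
        (A.length + A'.length + k + k) A A' k k le_rfl hcA hcA'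
      have hsum : lev A A' + lev B B' ≤ k := by
        rw [I1, I2]
        have g1 : hammingL (X.take (2 ^ q)) (Y.take (2 ^ q)) ≤ 2 ^ q := by
          have := hammingL_le_length (X.take (2 ^ q)) (Y.take (2 ^ q))
          omega
        have g2 : hammingL (X.drop (2 ^ q)) (Y.drop (2 ^ q)) ≤ 2 ^ q := by
          have := hammingL_le_length (X.drop (2 ^ q)) (Y.drop (2 ^ q))
          omega
        rw [hk, pow_succ] at *
        omega
      rw [expand, expand', hham, ← I1, ← I2]
      omega
end

section
/- Let k be even, m ≥ 2, and P ∈ Q(k,m). For every δ : ℕ, the number of one-per-block subsets S of Fin k × Fin m with |S Δ P| = δ equals the sum, over all pairs (x, y) with 0 ≤ x ≤ k/2, 0 ≤ y ≤ k/2 and 2x + 2y + k/2 = δ, of C(k/2, x) · C(k/2, y) · (m−1)^x · (m−2)^y · 2^{k/2 − y}. (Exact enumeration underlying Claim 3.6.) -/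
/-- The number of elements of `P` in block `i` (binary strings of length
`d = k * m` are identified with subsets of `Fin k × Fin m`). -/
def blockCount {k m : ℕ} (P : Finset (Fin k × Fin m)) (i : Fin k) : ℕ :=
  (P.filter fun p => p.1 = i).card

/-- A subset `S` of `Fin k × Fin m` is one-per-block if every block contains
exactly one element of `S`. -/
def OnePerBlock {k m : ℕ} (S : Finset (Fin k × Fin m)) : Prop :=
  ∀ i : Fin k, blockCount S i = 1

instance {k m : ℕ} : DecidablePred (OnePerBlock (k := k) (m := m)) := fun S =>
  inferInstanceAs (Decidable (∀ i, blockCount S i = 1))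

/-- The query family `Q(k,m)`: subsets `P` of `Fin k × Fin m` such that exactly
`k/2` blocks contain exactly one element of `P` and the remaining `k/2` blocks
contain exactly two elements of `P`. -/
def QFamily (k m : ℕ) : Finset (Finset (Fin k × Fin m)) :=
  Finset.univ.filter fun P =>
    (Finset.univ.filter fun i => blockCount P i = 1).card = k / 2 ∧
      ∀ i : Fin k, blockCount P i = 1 ∨ blockCount P i = 2

open Finset Polynomial
open scoped symmDiff

/-- The weight of choosing element `a` in block `i`: the contribution of block
`i` to the symmetric difference with `P` when `S` picks `a` there. -/
def wgt {k m : ℕ} (P : Finset (Fin k × Fin m)) (i : Fin k) (a : Fin m) : ℕ :=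
  (symmDiff {(i,a)} (P.filter fun p => p.1 = i)).card

/-- The graph of a function, as a one-per-block subset. -/
def grf {k m : ℕ} (f : Fin k → Fin m) : Finset (Fin k × Fin m) :=
  Finset.univ.image fun i => (i, f i)

lemma grf_filter {k m : ℕ} (f : Fin k → Fin m) (i : Fin k) :
    (grf f).filter (fun p => p.1 = i) = {(i, f i)} := by
  ext p
  simp only [grf, mem_filter, mem_image, mem_univ, true_and, mem_singleton]
  constructor
  · rintro ⟨⟨j, rfl⟩, h⟩; simp at h; subst h; rfl
  · rintro rfl; exact ⟨⟨i, rfl⟩, rfl⟩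

lemma grf_opb {k m : ℕ} (f : Fin k → Fin m) : OnePerBlock (grf f) := by
  intro i; rw [blockCount, grf_filter]; simp

lemma symmDiff_filter {k m : ℕ} (S P : Finset (Fin k × Fin m)) (i : Fin k) :
    (symmDiff S P).filter (fun p => p.1 = i) =
      symmDiff (S.filter (fun p => p.1 = i)) (P.filter (fun p => p.1 = i)) := by
  ext p
  simp only [mem_filter, Finset.mem_symmDiff]
  tauto

lemma card_symmDiff_grf {k m : ℕ} (f : Fin k → Fin m) (P : Finset (Fin k × Fin m)) :
    (symmDiff (grf f) P).card = ∑ i : Fin k, wgt P i (f i) := by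
  rw [Finset.card_eq_sum_card_fiberwise (f := Prod.fst) (t := univ) (fun x _ => mem_univ _)]
  refine Finset.sum_congr rfl fun i _ => ?_
  rw [symmDiff_filter, grf_filter]
  rfl

/-- Step 1: counting one-per-block sets at distance `δ` is counting functions
with weight sum `δ`. -/
lemma step1 {k m : ℕ} (P : Finset (Fin k × Fin m)) (δ : ℕ) :
    (Finset.univ.filter fun S : Finset (Fin k × Fin m) =>
        OnePerBlock S ∧ (symmDiff S P).card = δ).card =
    (Finset.univ.filter fun f : Fin k → Fin m => ∑ i, wgt P i (f i) = δ).card := by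
  symm
  apply Finset.card_bij (fun f _ => grf f)
  · intro f hf
    simp only [mem_filter, mem_univ, true_and] at hf ⊢
    exact ⟨grf_opb f, by rw [card_symmDiff_grf]; exact hf⟩
  · intro f _ g _ h
    funext i
    have := congrArg (fun S => S.filter (fun p => p.1 = i)) h
    simp only [grf_filter] at this
    have := Finset.singleton_injective this
    exact (Prod.mk.injEq _ _ _ _).mp this |>.2
  · intro S hS
    simp only [mem_filter, mem_univ, true_and] at hS
    obtain ⟨hopb, hd⟩ := hS
    have hex : ∀ i, ∃ a, S.filter (fun p => p.1 = i) = {a} := fun i =>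
      Finset.card_eq_one.mp (hopb i)
    choose g hg using hex
    have hg1 : ∀ i, (g i).1 = i := by
      intro i
      have : g i ∈ S.filter (fun p => p.1 = i) := by rw [hg i]; exact mem_singleton_self _
      exact (mem_filter.mp this).2
    set f : Fin k → Fin m := fun i => (g i).2 with hf
    have hgi : ∀ i, g i = (i, f i) := by
      intro i; ext
      · simp [hg1 i]
      · rfl
    have hSf : grf f = S := by
      ext p
      simp only [grf, mem_image, mem_univ, true_and]
      constructor
      · rintro ⟨j, rfl⟩
        have : (j, f j) ∈ S.filter (fun p => p.1 = j) := by
          rw [hg j]; rw [← hgi j]; exact mem_singleton_self _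
        exact (mem_filter.mp this).1
      · intro hp
        refine ⟨p.1, ?_⟩
        have : p ∈ S.filter (fun q => q.1 = p.1) := mem_filter.mpr ⟨hp, rfl⟩
        rw [hg p.1] at this
        rw [← hgi p.1, ← mem_singleton.mp this]
    refine ⟨f, ?_, hSf⟩
    simp only [mem_filter, mem_univ, true_and]
    rw [← card_symmDiff_grf, hSf]; exact hd

/-- Step 2: the function count is a coefficient of a product of polynomials. -/
lemma step2 {k m : ℕ} (P : Finset (Fin k × Fin m)) (δ : ℕ) :
    (Finset.univ.filter fun f : Fin k → Fin m => ∑ i, wgt P i (f i) = δ).card =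
    (∏ i : Fin k, ∑ a : Fin m, (X:ℕ[X])^(wgt P i a)).coeff δ := by
  rw [Finset.prod_univ_sum, Fintype.piFinset_univ, finset_sum_coeff, Finset.card_filter]
  refine Finset.sum_congr rfl fun f _ => ?_
  rw [Finset.prod_pow_eq_pow_sum, coeff_X_pow]
  simp [eq_comm]

/-- Step 3: the block polynomial for a block with `c` elements of `P`. -/
lemma step3 {k m : ℕ} (P : Finset (Fin k × Fin m)) (i : Fin k) (c : ℕ)
    (hc : (P.filter fun p => p.1 = i).card = c) (hcm : c ≤ m) :
    ∑ a : Fin m, (X:ℕ[X])^(wgt P i a) =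
      C c * X^(c-1) + C (m - c) * X^(c+1) := by
  classical
  set Pi := P.filter fun p => p.1 = i with hPi
  have hcard : (univ.filter fun a : Fin m => (i,a) ∈ Pi).card = c := by
    rw [← hc]
    apply Finset.card_bij (fun a _ => (i, a))
    · intro a ha; exact (mem_filter.mp ha).2
    · intro a _ b _ h; exact (Prod.mk.injEq _ _ _ _).mp h |>.2
    · intro p hp
      have h1 : p.1 = i := (mem_filter.mp hp).2
      have hpe : p = (i, p.2) := by ext <;> simp [h1]
      exact ⟨p.2, by simp [← hpe, hp], by rw [← hpe]⟩
  rw [← Finset.sum_filter_add_sum_filter_not univ (fun a : Fin m => (i,a) ∈ Pi)]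
  have h1 : ∀ a ∈ univ.filter fun a : Fin m => (i,a) ∈ Pi,
      (X:ℕ[X])^(wgt P i a) = X^(c-1) := by
    intro a ha
    have ha' : (i,a) ∈ Pi := (mem_filter.mp ha).2
    have : wgt P i a = c - 1 := by
      unfold wgt
      rw [← hPi, symmDiff_of_le (by simp [ha']), card_sdiff_of_subset (by simp [ha']), hc, card_singleton]
    rw [this]
  have h2 : ∀ a ∈ univ.filter fun a : Fin m => ¬ (i,a) ∈ Pi,
      (X:ℕ[X])^(wgt P i a) = X^(c+1) := by
    intro a ha
    have ha' : (i,a) ∉ Pi := (mem_filter.mp ha).2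
    have hd : Disjoint {(i,a)} Pi := Finset.disjoint_singleton_left.mpr ha'
    have : wgt P i a = c + 1 := by
      unfold wgt
      rw [← hPi, hd.symmDiff_eq_sup, sup_eq_union, card_union_of_disjoint hd, hc, card_singleton]
      omega
    rw [this]
  rw [Finset.sum_congr rfl h1, Finset.sum_congr rfl h2, Finset.sum_const, Finset.sum_const,
    hcard]
  have hcard2 : (univ.filter fun a : Fin m => ¬ (i,a) ∈ Pi).card = m - c := by
    have := Finset.card_filter_add_card_filter_not (s := (univ : Finset (Fin m)))
      (p := fun a => (i,a) ∈ Pi)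
    simp only [Finset.card_univ, Fintype.card_fin] at this
    omega
  rw [hcard2]
  simp [nsmul_eq_mul, C_eq_natCast]

lemma hA (n c : ℕ) : ((1 : ℕ[X]) + C c * X^2)^n =
    ∑ x ∈ Finset.range (n+1), C (n.choose x * c^x) * X^(2*x) := by
  rw [add_comm, add_pow]
  refine Finset.sum_congr rfl fun x _ => ?_
  simp only [one_pow, mul_one, C_mul, C_pow, ← C_eq_natCast, Nat.cast_id]
  ring

lemma hB (n c : ℕ) : ((C 2 : ℕ[X]) * X + C c * X^3)^n =
    ∑ y ∈ Finset.range (n+1), C (n.choose y * c^y * 2^(n-y)) * X^(2*y+n) := by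
  have h : (C 2 : ℕ[X]) * X + C c * X^3 = (C c * X^2 + C 2) * X := by ring
  rw [h, mul_pow, add_pow, Finset.sum_mul]
  refine Finset.sum_congr rfl fun y _ => ?_
  simp only [C_mul, C_pow, ← C_eq_natCast, Nat.cast_id]
  ring

/-- Step 5: the explicit coefficient of the product. -/
lemma step5 (n m δ : ℕ) :
    (((1 : ℕ[X]) + C (m-1) * X^2)^n * (C 2 * X + C (m-2) * X^3)^n).coeff δ =
    ∑ x ∈ Finset.range (n+1), ∑ y ∈ Finset.range (n+1),
      if 2*x + 2*y + n = δ then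
        n.choose x * n.choose y * (m-1)^x * (m-2)^y * 2^(n-y) else 0 := by
  rw [hA, hB, Finset.sum_mul_sum, finset_sum_coeff]
  refine Finset.sum_congr rfl fun x hx => ?_
  rw [finset_sum_coeff]
  refine Finset.sum_congr rfl fun y hy => ?_
  rw [show (C (n.choose x * (m-1)^x) * X^(2*x)) * (C (n.choose y * (m-2)^y * 2^(n-y)) * X^(2*y+n))
      = C (n.choose x * n.choose y * (m-1)^x * (m-2)^y * 2^(n-y)) * X^(2*x+2*y+n) by
    simp only [C_mul, C_pow]; ring]
  rw [coeff_C_mul, coeff_X_pow]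
  simp only [mul_ite, mul_one, mul_zero]
  exact if_congr (by omega) rfl rfl

/-- Exact enumeration underlying Claim 3.6: for even `k`, `m ≥ 2`,
`P ∈ Q(k,m)` and any `δ`, the number of one-per-block subsets `S` with
`|S Δ P| = δ` equals the sum over pairs `(x, y)` with `0 ≤ x, y ≤ k/2` and
`2x + 2y + k/2 = δ` of
`C(k/2, x) * C(k/2, y) * (m-1)^x * (m-2)^y * 2^(k/2 - y)`. -/
theorem card_one_per_block_at_dist (k m : ℕ) (hke : Even k) (hm : 2 ≤ m)
    (P : Finset (Fin k × Fin m)) (hP : P ∈ QFamily k m) (δ : ℕ) :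
    (Finset.univ.filter fun S : Finset (Fin k × Fin m) =>
        OnePerBlock S ∧ (symmDiff S P).card = δ).card =
      ∑ x ∈ Finset.range (k / 2 + 1), ∑ y ∈ Finset.range (k / 2 + 1),
        if 2 * x + 2 * y + k / 2 = δ then
          Nat.choose (k / 2) x * Nat.choose (k / 2) y *
            (m - 1) ^ x * (m - 2) ^ y * 2 ^ (k / 2 - y)
        else 0 := by
  classical
  rw [QFamily, mem_filter] at hP
  obtain ⟨-, hT, h12⟩ := hP
  set n := k / 2 with hn
  obtain ⟨t, ht⟩ := hke
  have hkn : k = n + n := by omega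
  rw [step1, step2]
  have hprod : (∏ i : Fin k, ∑ a : Fin m, (X:ℕ[X])^(wgt P i a)) =
      ((1 : ℕ[X]) + C (m-1) * X^2)^n * (C 2 * X + C (m-2) * X^3)^n := by
    rw [← Finset.prod_filter_mul_prod_filter_not univ (fun i => blockCount P i = 1)]
    have e1 : ∀ i ∈ univ.filter (fun i => blockCount P i = 1),
        (∑ a : Fin m, (X:ℕ[X])^(wgt P i a)) = (1 : ℕ[X]) + C (m-1) * X^2 := by
      intro i hi
      have h1 : (P.filter fun p => p.1 = i).card = 1 := (mem_filter.mp hi).2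
      rw [step3 P i 1 h1 (by omega)]
      norm_num
    have e2 : ∀ i ∈ univ.filter (fun i => ¬ blockCount P i = 1),
        (∑ a : Fin m, (X:ℕ[X])^(wgt P i a)) = (C 2 : ℕ[X]) * X + C (m-2) * X^3 := by
      intro i hi
      have hne : ¬ blockCount P i = 1 := (mem_filter.mp hi).2
      have h2 : (P.filter fun p => p.1 = i).card = 2 := (h12 i).resolve_left hne
      rw [step3 P i 2 h2 hm]
      norm_num
    rw [Finset.prod_congr rfl e1, Finset.prod_congr rfl e2, Finset.prod_const,
      Finset.prod_const, hT]
    have hcc : (univ.filter (fun i => ¬ blockCount P i = 1)).card = n := by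
      have := Finset.card_filter_add_card_filter_not
        (s := (univ : Finset (Fin k))) (p := fun i => blockCount P i = 1)
      simp only [Finset.card_univ, Fintype.card_fin] at this
      omega
    rw [hcc]
  rw [hprod, step5]
end

section
/- Let k be divisible by 4, m ≥ 2, and P ∈ Q(k,m). The number of one-per-block subsets S of Fin k × Fin m with |S Δ P| = k is at least C(k, k/4) · 2^{k/4} · (m−2)^{k/4}. (Lower bound on the number of dictionary-type strings at Hamming distance exactly k from a query string; conclusion of Claim 3.6 via Vandermonde's identity.) -/
open Finset

private lemma fiber_card {k m : ℕ} (T : Finset (Fin k × Fin m)) :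
    T.card = ∑ i : Fin k, (T.filter fun p => p.1 = i).card :=
  card_eq_sum_card_fiberwise (fun p _ => mem_univ p.1)

private lemma filter_symmDiff' {α : Type*} [DecidableEq α] (S T : Finset α) (pr : α → Prop)
    [DecidablePred pr] :
    (symmDiff S T).filter pr = symmDiff (S.filter pr) (T.filter pr) := by
  ext x; simp only [Finset.mem_symmDiff, mem_filter]; tauto

private lemma card_symmDiff_singleton {α : Type*} [DecidableEq α] (a : α) (T : Finset α) :
    (symmDiff {a} T).card = if a ∈ T then T.card - 1 else T.card + 1 := by
  by_cases h : a ∈ T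
  · rw [if_pos h]
    have e : symmDiff ({a} : Finset α) T = T.erase a := by
      ext x
      simp only [Finset.mem_symmDiff, Finset.mem_singleton, Finset.mem_erase]
      constructor
      · rintro (⟨rfl, hx⟩ | ⟨hx, hxa⟩)
        · exact absurd h hx
        · exact ⟨hxa, hx⟩
      · rintro ⟨hxa, hx⟩; exact Or.inr ⟨hx, hxa⟩
    rw [e, card_erase_of_mem h]
  · rw [if_neg h]
    have e : symmDiff ({a} : Finset α) T = insert a T := by
      ext x
      simp only [Finset.mem_symmDiff, Finset.mem_singleton, Finset.mem_insert]
      constructor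
      · rintro (⟨rfl, _⟩ | ⟨hx, _⟩)
        · exact Or.inl rfl
        · exact Or.inr hx
      · rintro (rfl | hx)
        · exact Or.inl ⟨rfl, h⟩
        · exact Or.inr ⟨hx, fun e => h (e ▸ hx)⟩
    rw [e, card_insert_of_notMem h]

private lemma blockCount_eq' {k m : ℕ} (P : Finset (Fin k × Fin m)) (i : Fin k) :
    blockCount P i = (Finset.univ.filter fun j => (i, j) ∈ P).card := by
  unfold blockCount
  apply Finset.card_bij (fun p _ => p.2)
  · intro p hp; simp only [mem_filter] at hp; simp only [mem_filter, mem_univ, true_and]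
    rcases hp with ⟨hp, h1⟩; rw [← h1]; exact hp
  · intro p hp p' hp' h
    simp only [mem_filter] at hp hp'
    exact Prod.ext (hp.2.trans hp'.2.symm) h
  · intro j hj; simp only [mem_filter, mem_univ, true_and] at hj
    exact ⟨(i, j), by simp [hj], rfl⟩

private lemma filter_image_eq {k m : ℕ} (s : Fin k → Fin m) (i : Fin k) :
    ((Finset.univ.image fun j => (j, s j)).filter fun p => p.1 = i) = {(i, s i)} := by
  ext p
  simp only [mem_filter, mem_image, mem_univ, true_and, mem_singleton]
  constructor
  · rintro ⟨⟨j, rfl⟩, hi⟩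
    simp only at hi
    subst hi; rfl
  · rintro rfl; exact ⟨⟨i, rfl⟩, rfl⟩

private lemma dist_eq {q m : ℕ} (P : Finset (Fin (4*q) × Fin m))
    (hc : ∀ i, blockCount P i = 1 ∨ blockCount P i = 2)
    (hsumc : ∑ i, blockCount P i = 6 * q)
    (s : Fin (4*q) → Fin m)
    (hs : (Finset.univ.filter fun i => (i, s i) ∉ P).card = q) :
    (symmDiff (Finset.univ.image fun j => (j, s j)) P).card = 4 * q := by
  rw [fiber_card (symmDiff _ P)]
  have hterm : ∀ i : Fin (4*q),
      ((symmDiff (Finset.univ.image fun j => (j, s j)) P).filter fun p => p.1 = i).card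
        = if (i, s i) ∈ P then blockCount P i - 1 else blockCount P i + 1 := by
    intro i
    rw [filter_symmDiff', filter_image_eq, card_symmDiff_singleton]
    have hmem : ((i, s i) ∈ P.filter fun p => p.1 = i) ↔ (i, s i) ∈ P := by
      simp
    unfold blockCount
    by_cases h : (i, s i) ∈ P
    · rw [if_pos (hmem.mpr h), if_pos h]
    · rw [if_neg (fun hh => h (hmem.mp hh)), if_neg h]
  rw [Finset.sum_congr rfl fun i _ => hterm i]
  rw [Finset.sum_ite]
  have hGood : (univ.filter fun i => (i, s i) ∈ P).card = 3 * q := by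
    have h2 : (univ.filter fun i => (i, s i) ∈ P).card
        + (univ.filter fun i => ¬ ((i, s i) ∈ P)).card = 4 * q := by
      rw [card_filter_add_card_filter_not]
      simp
    omega
  have h1 : ∑ i ∈ univ.filter (fun i => (i, s i) ∈ P), (blockCount P i - 1)
      + (univ.filter fun i => (i, s i) ∈ P).card
      = ∑ i ∈ univ.filter (fun i => (i, s i) ∈ P), blockCount P i := by
    have e : ∑ i ∈ univ.filter (fun i => (i, s i) ∈ P), blockCount P i
        = ∑ i ∈ univ.filter (fun i => (i, s i) ∈ P), ((blockCount P i - 1) + 1) :=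
      Finset.sum_congr rfl fun i _ => by rcases hc i with h | h <;> omega
    rw [e, Finset.sum_add_distrib, Finset.sum_const, smul_eq_mul, mul_one]
  have h2 : ∑ i ∈ univ.filter (fun i => ¬ ((i, s i) ∈ P)), (blockCount P i + 1)
      = ∑ i ∈ univ.filter (fun i => ¬ ((i, s i) ∈ P)), blockCount P i
        + (univ.filter fun i => ¬ ((i, s i) ∈ P)).card := by
    rw [Finset.sum_add_distrib, Finset.sum_const, smul_eq_mul, mul_one]
  have h3 : ∑ i ∈ univ.filter (fun i => (i, s i) ∈ P), blockCount P i
      + ∑ i ∈ univ.filter (fun i => ¬ ((i, s i) ∈ P)), blockCount P i = 6 * q := by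
    rw [Finset.sum_filter_add_sum_filter_not]; exact hsumc
  omega

private lemma count_ge {q m : ℕ} (P : Finset (Fin (4*q) × Fin m))
    (hc : ∀ i, blockCount P i = 1 ∨ blockCount P i = 2)
    (hB : (univ.filter fun i => ¬ (blockCount P i = 1)).card = 2 * q) :
    Nat.choose (4*q) q * 2 ^ q * (m - 2) ^ q ≤
      (univ.filter fun s : Fin (4*q) → Fin m =>
        (Finset.univ.filter fun i => (i, s i) ∉ P).card = q).card := by
  classical
  rw [card_eq_sum_card_fiberwise
    (f := fun s : Fin (4*q) → Fin m => Finset.univ.filter fun i => (i, s i) ∉ P)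
    (t := Finset.univ.powersetCard q)
    (fun s hs => by
      rw [mem_coe, mem_filter] at hs
      exact mem_powersetCard.mpr ⟨subset_univ _, hs.2⟩)]
  have hbound : ∀ X ∈ (Finset.univ : Finset (Fin (4*q))).powersetCard q,
      2 ^ q * (m - 2) ^ q ≤
        (((univ.filter fun s : Fin (4*q) → Fin m =>
            (Finset.univ.filter fun i => (i, s i) ∉ P).card = q).filter
          fun s => (Finset.univ.filter fun i => (i, s i) ∉ P) = X)).card := by
    intro X hX
    obtain ⟨-, hXcard⟩ := mem_powersetCard.mp hX
    set O : Fin (4*q) → Finset (Fin m) := fun i =>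
      if i ∈ X then (Finset.univ.filter fun j => (i, j) ∈ P)ᶜ
      else Finset.univ.filter fun j => (i, j) ∈ P with hO
    have hmemO : ∀ (s : Fin (4*q) → Fin m) (i : Fin (4*q)),
        s i ∈ O i ↔ (i ∈ X ↔ (i, s i) ∉ P) := by
      intro s i
      by_cases hi : i ∈ X
      · simp only [hO, if_pos hi, mem_compl, mem_filter, mem_univ, true_and]; tauto
      · simp only [hO, if_neg hi, mem_filter, mem_univ, true_and]; tauto
    have hfib : ((univ.filter fun s : Fin (4*q) → Fin m =>
            (Finset.univ.filter fun i => (i, s i) ∉ P).card = q).filter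
          fun s => (Finset.univ.filter fun i => (i, s i) ∉ P) = X)
        = Fintype.piFinset O := by
      ext s
      simp only [mem_filter, mem_univ, true_and, Fintype.mem_piFinset, hmemO s]
      constructor
      · rintro ⟨-, rfl⟩ i
        simp only [mem_filter, mem_univ, true_and]
      · intro h
        have hBX : (Finset.univ.filter fun i => (i, s i) ∉ P) = X := by
          ext i
          simp only [mem_filter, mem_univ, true_and]
          exact (h i).symm
        refine ⟨?_, hBX⟩
        rw [hBX]; exact hXcard
    rw [hfib, Fintype.card_piFinset]
    have hOcard : ∀ i, (O i).card = if i ∈ X then m - blockCount P i else blockCount P i := by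
      intro i
      by_cases hi : i ∈ X
      · simp only [hO, if_pos hi, card_compl, Fintype.card_fin, blockCount_eq']
      · simp only [hO, if_neg hi, blockCount_eq']
    rw [Finset.prod_congr rfl fun i _ => hOcard i]
    rw [← Finset.prod_mul_prod_compl X]
    have e1 : ∏ i ∈ X, (if i ∈ X then m - blockCount P i else blockCount P i)
        = ∏ i ∈ X, (m - blockCount P i) :=
      Finset.prod_congr rfl fun i hi => if_pos hi
    have e2 : ∏ i ∈ Xᶜ, (if i ∈ X then m - blockCount P i else blockCount P i)
        = ∏ i ∈ Xᶜ, blockCount P i :=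
      Finset.prod_congr rfl fun i hi => if_neg (mem_compl.mp hi)
    rw [e1, e2, mul_comm]
    apply Nat.mul_le_mul
    · -- (m-2)^q ≤ ∏ over X of (m - blockCount)
      calc (m - 2) ^ q = ∏ i ∈ X, (m - 2) := by rw [Finset.prod_const, hXcard]
        _ ≤ ∏ i ∈ X, (m - blockCount P i) := by
            apply Finset.prod_le_prod'
            intro i _
            rcases hc i with h | h <;> omega
    · -- 2 ^ q ≤ ∏ over Xᶜ of blockCount
      have hsub : ((univ.filter fun i => ¬ (blockCount P i = 1)) \ X) ⊆ Xᶜ := by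
        intro i hi
        exact mem_compl.mpr (mem_sdiff.mp hi).2
      calc 2 ^ q ≤ 2 ^ ((univ.filter fun i => ¬ (blockCount P i = 1)) \ X).card := by
            apply Nat.pow_le_pow_right (by norm_num)
            have := Finset.le_card_sdiff X (univ.filter fun i => ¬ (blockCount P i = 1))
            omega
        _ = ∏ i ∈ (univ.filter fun i => ¬ (blockCount P i = 1)) \ X, 2 := by
            rw [Finset.prod_const]
        _ ≤ ∏ i ∈ (univ.filter fun i => ¬ (blockCount P i = 1)) \ X, blockCount P i := by
            apply Finset.prod_le_prod'
            intro i hi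
            have h1 := (mem_filter.mp (mem_sdiff.mp hi).1).2
            rcases hc i with h | h <;> omega
        _ ≤ ∏ i ∈ Xᶜ, blockCount P i := by
            apply Finset.prod_le_prod_of_subset_of_one_le' hsub
            intro i _ _
            rcases hc i with h | h <;> omega
  calc Nat.choose (4*q) q * 2 ^ q * (m - 2) ^ q
      = ∑ _X ∈ (Finset.univ : Finset (Fin (4*q))).powersetCard q, 2 ^ q * (m-2) ^ q := by
        rw [Finset.sum_const, smul_eq_mul, card_powersetCard, card_univ, Fintype.card_fin,
          mul_assoc]
    _ ≤ _ := Finset.sum_le_sum hbound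

/-- Conclusion of Claim 3.6 (via Vandermonde's identity): for `k` divisible by
`4`, `m ≥ 2`, and `P ∈ Q(k,m)`, the number of one-per-block subsets `S` with
`|S Δ P| = k` is at least `C(k, k/4) * 2^(k/4) * (m-2)^(k/4)`. -/
theorem card_one_per_block_at_dist_k_ge (k m : ℕ) (hk : 4 ∣ k) (hm : 2 ≤ m)
    (P : Finset (Fin k × Fin m)) (hP : P ∈ QFamily k m) :
    Nat.choose k (k / 4) * 2 ^ (k / 4) * (m - 2) ^ (k / 4) ≤
      (Finset.univ.filter fun S : Finset (Fin k × Fin m) =>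
        OnePerBlock S ∧ (symmDiff S P).card = k).card := by
  classical
  obtain ⟨q, rfl⟩ := hk
  simp only [QFamily, mem_filter, mem_univ, true_and] at hP
  obtain ⟨hA, hc⟩ := hP
  have hq4 : 4 * q / 4 = q := by omega
  have hA' : (univ.filter fun i => blockCount P i = 1).card = 2 * q := by omega
  have hB : (univ.filter fun i => ¬ (blockCount P i = 1)).card = 2 * q := by
    have h := card_filter_add_card_filter_not
      (s := (univ : Finset (Fin (4*q)))) (p := fun i => blockCount P i = 1)
    rw [card_univ, Fintype.card_fin] at h
    omega
  have hsumc : ∑ i, blockCount P i = 6 * q := by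
    rw [← Finset.sum_filter_add_sum_filter_not univ (fun i => blockCount P i = 1)]
    have e1 : ∑ i ∈ univ.filter (fun i => blockCount P i = 1), blockCount P i
        = 2 * q := by
      rw [Finset.sum_congr rfl (fun i hi => (mem_filter.mp hi).2), Finset.sum_const,
        smul_eq_mul, mul_one, hA']
    have e2 : ∑ i ∈ univ.filter (fun i => ¬ (blockCount P i = 1)), blockCount P i
        = 4 * q := by
      have e : ∀ i ∈ univ.filter (fun i => ¬ (blockCount P i = 1)), blockCount P i = 2 := by
        intro i hi
        have := (mem_filter.mp hi).2
        rcases hc i with h | h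
        · exact absurd h this
        · exact h
      rw [Finset.sum_congr rfl e, Finset.sum_const, smul_eq_mul, hB]
      ring
    omega
  rw [hq4]
  refine le_trans (count_ge P hc hB) ?_
  apply Finset.card_le_card_of_injOn (fun s => Finset.univ.image fun j => (j, s j))
  · intro s hs
    simp only [mem_coe, mem_filter, mem_univ, true_and] at hs ⊢
    constructor
    · intro i
      unfold blockCount
      rw [filter_image_eq]
      exact card_singleton _
    · exact dist_eq P hc hsumc s hs
  · intro s hs s' hs' h
    funext i
    have hmem : (i, s i) ∈ Finset.univ.image fun j => (j, s' j) := by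
      have h' : Finset.univ.image (fun j => (j, s j)) = Finset.univ.image fun j => (j, s' j) := h
      rw [← h']
      exact mem_image.mpr ⟨i, mem_univ i, rfl⟩
    obtain ⟨j, -, hj⟩ := mem_image.mp hmem
    obtain ⟨h1, h2⟩ := Prod.mk.injEq .. ▸ hj
    exact (h1 ▸ h2).symm
end

section
/- Let k be even, m ≥ 2, P ∈ Q(k,m), and let S be a one-per-block subset of Fin k × Fin m. Then |S Δ P| ≥ k/2, and moreover |S Δ P| − k/2 is even (equivalently, |S Δ P| ≡ k/2 (mod 2)). (Minimum-distance and parity fact used in the proofs of Claim 3.6 and Lemma 3.8.) -/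
lemma symm_card_parity {α : Type*} [DecidableEq α] (A B : Finset α) :
    Even ((symmDiff A B).card + A.card + B.card) := by
  have h1 : (symmDiff A B).card = (A \ B).card + (B \ A).card := by
    rw [symmDiff_def]
    exact Finset.card_union_of_disjoint disjoint_sdiff_sdiff
  have h2 : (A \ B).card + (A ∩ B).card = A.card := Finset.card_sdiff_add_card_inter A B
  have h3 : (B \ A).card + (B ∩ A).card = B.card := Finset.card_sdiff_add_card_inter B A
  have h4 : (A ∩ B).card = (B ∩ A).card := by rw [Finset.inter_comm]
  rw [Nat.even_iff]; omega

lemma filter_symmDiff {α : Type*} [DecidableEq α] (A B : Finset α) (p : α → Prop)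
    [DecidablePred p] :
    (symmDiff A B).filter p = symmDiff (A.filter p) (B.filter p) := by
  ext x
  simp [Finset.mem_symmDiff, Finset.mem_filter]
  tauto

lemma blockCount_symmDiff_parity {k m : ℕ} (S P : Finset (Fin k × Fin m)) (i : Fin k) :
    Even (blockCount (symmDiff S P) i + blockCount S i + blockCount P i) := by
  unfold blockCount
  rw [filter_symmDiff]
  exact symm_card_parity _ _

lemma card_eq_sum_blockCount {k m : ℕ} (P : Finset (Fin k × Fin m)) :
    P.card = ∑ i : Fin k, blockCount P i :=
  Finset.card_eq_sum_card_fiberwise (fun x _ => Finset.mem_univ x.1)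

/-- Minimum-distance and parity fact (used in Claim 3.6 and Lemma 3.8): for
even `k`, `m ≥ 2`, `P ∈ Q(k,m)` and a one-per-block subset `S`, we have
`|S Δ P| ≥ k/2` and `|S Δ P| - k/2` is even. -/
theorem symmDiff_card_ge_and_parity (k m : ℕ) (hke : Even k) (hm : 2 ≤ m)
    (P : Finset (Fin k × Fin m)) (hP : P ∈ QFamily k m)
    (S : Finset (Fin k × Fin m)) (hS : OnePerBlock S) :
    k / 2 ≤ (symmDiff S P).card ∧ Even ((symmDiff S P).card - k / 2) := by
  obtain ⟨hP1, hP2⟩ := (Finset.mem_filter.mp hP).2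
  set f : Fin k → ℕ := fun i => blockCount (symmDiff S P) i with hf
  have htot : (symmDiff S P).card = ∑ i : Fin k, f i := card_eq_sum_blockCount _
  set T := Finset.univ.filter fun i : Fin k => blockCount P i = 1 with hT
  set Tc := Finset.univ.filter fun i : Fin k => ¬ blockCount P i = 1 with hTc
  have hsplit : ∑ i : Fin k, f i = ∑ i ∈ T, f i + ∑ i ∈ Tc, f i :=
    (Finset.sum_filter_add_sum_filter_not _ _ _).symm
  have hcardTc : Tc.card = k / 2 := by
    have : T.card + Tc.card = (Finset.univ : Finset (Fin k)).card :=
      Finset.card_filter_add_card_filter_not _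
    rw [Finset.card_univ, Fintype.card_fin] at this
    obtain ⟨r, hr⟩ := hke
    omega
  -- parity/oddness per block
  have hTeven : ∀ i ∈ T, Even (f i) := by
    intro i hi
    have hb : blockCount P i = 1 := (Finset.mem_filter.mp hi).2
    have h := blockCount_symmDiff_parity S P i
    rw [hS i, hb, Nat.even_iff] at h
    show Even (blockCount (symmDiff S P) i)
    rw [Nat.even_iff]; omega
  have hTcodd : ∀ i ∈ Tc, Odd (f i) := by
    intro i hi
    have hb : blockCount P i = 2 := by
      have := (Finset.mem_filter.mp hi).2
      rcases hP2 i with h | h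
      · exact absurd h this
      · exact h
    have := blockCount_symmDiff_parity S P i
    rw [hS i, hb, Nat.even_iff] at this
    show Odd (blockCount (symmDiff S P) i)
    rw [Nat.odd_iff]; omega
  have hge : Tc.card ≤ ∑ i ∈ Tc, f i := by
    calc Tc.card = ∑ _i ∈ Tc, 1 := by simp
    _ ≤ ∑ i ∈ Tc, f i := Finset.sum_le_sum fun i hi => (hTcodd i hi).pos
  have hge' : k / 2 ≤ (symmDiff S P).card := by
    rw [htot, hsplit]; omega
  refine ⟨hge', ?_⟩
  have hpar : Even ((symmDiff S P).card + k / 2) := by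
    rw [htot, hsplit, ← hcardTc]
    have h1 : Even (∑ i ∈ T, f i) := by
      rw [Nat.even_iff, Finset.sum_nat_mod]
      have : ∑ i ∈ T, f i % 2 = 0 :=
        Finset.sum_eq_zero fun i hi => Nat.even_iff.mp (hTeven i hi)
      simp [this]
    have h2 : Even (∑ i ∈ Tc, f i + Tc.card) := by
      have he : ∑ i ∈ Tc, f i + Tc.card = ∑ i ∈ Tc, (f i + 1) := by
        rw [Finset.sum_add_distrib]; simp
      rw [he, Nat.even_iff, Finset.sum_nat_mod]
      have : ∑ i ∈ Tc, (f i + 1) % 2 = 0 :=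
        Finset.sum_eq_zero fun i hi => by
          have := Nat.odd_iff.mp (hTcodd i hi); omega
      simp [this]
    rw [Nat.even_iff] at h1 h2 ⊢
    omega
  rw [Nat.even_iff] at hpar ⊢
  omega
end

section
/- Let k ≥ 16 be divisible by 16, let m ≥ 2k, and identify binary strings of length d = k·m with subsets of Fin k × Fin m. Let S₁ and S₂ be one-per-block subsets with |S₁ Δ S₂| > k/8. Then the number of P ∈ Q(k,m) satisfying both |P Δ S₁| ≤ k and |P Δ S₂| ≤ k is at most k³ · C(k/8, k/16) · C(k, 3k/16) · C(k, k/2) · m^{3k/4}. (Lemma 3.8: upper bound on the number of query strings in the intersection of two Hamming balls of radius k around well-separated dictionary strings.) -/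
lemma sum_blockCount {k m : ℕ} (X : Finset (Fin k × Fin m)) :
    ∑ i, blockCount X i = X.card := by
  have := Finset.card_eq_sum_card_fiberwise (f := Prod.fst) (s := X) (t := Finset.univ)
    (fun x _ => Finset.mem_univ _)
  simpa [blockCount] using this.symm

lemma filter_block_sdiff {k m : ℕ} (X Y : Finset (Fin k × Fin m)) (i : Fin k) :
    ((X \ Y).filter fun p => p.1 = i)
      = (X.filter fun p => p.1 = i) \ (Y.filter fun p => p.1 = i) := by
  ext p
  simp only [Finset.mem_filter, Finset.mem_sdiff]
  tauto

lemma card_fixed_blockCounts {k m : ℕ} (c : Fin k → ℕ) :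
    (Finset.univ.filter fun F : Finset (Fin k × Fin m) => ∀ i, blockCount F i = c i).card
      ≤ m ^ (∑ i, c i) := by
  classical
  have key : ∀ (G : Finset (Fin k × Fin m)) (i : Fin k) (j : Fin m),
      (i, j) ∈ G ↔ j ∈ (G.filter fun p => p.1 = i).image Prod.snd := by
    intro G i j
    simp only [Finset.mem_image, Finset.mem_filter]
    constructor
    · exact fun hg => ⟨(i, j), ⟨hg, rfl⟩, rfl⟩
    · rintro ⟨⟨a, b⟩, ⟨hg, ha⟩, hb⟩
      simp only at ha hb
      subst ha; subst hb; exact hg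
  have h1 : (Finset.univ.filter fun F : Finset (Fin k × Fin m) => ∀ i, blockCount F i = c i).card
      ≤ (Finset.univ.pi fun i : Fin k =>
          (Finset.univ : Finset (Fin m)).powersetCard (c i)).card := by
    apply Finset.card_le_card_of_injOn
      (fun F => fun i _ => (F.filter fun p => p.1 = i).image Prod.snd)
    · intro F hF
      simp only [Finset.mem_coe, Finset.mem_filter, Finset.mem_univ, true_and] at hF
      rw [Finset.mem_coe, Finset.mem_pi]
      intro i _
      rw [Finset.mem_powersetCard]
      refine ⟨Finset.subset_univ _, ?_⟩
      have hinj : Set.InjOn Prod.snd (↑(F.filter fun p => p.1 = i) : Set (Fin k × Fin m)) := by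
        intro p hp q hq hpq
        simp only [Finset.coe_filter, Set.mem_setOf_eq] at hp hq
        exact Prod.ext (hp.2.trans hq.2.symm) hpq
      rw [Finset.card_image_of_injOn hinj]
      exact hF i
    · intro F _ F' _ h
      ext ⟨i, j⟩
      have h' := congrFun (congrFun h i) (Finset.mem_univ i)
      dsimp only at h'
      rw [key F i j, key F' i j, h']
  refine h1.trans ?_
  rw [Finset.card_pi]
  calc ∏ i, ((Finset.univ : Finset (Fin m)).powersetCard (c i)).card
      ≤ ∏ i : Fin k, m ^ (c i) := by
        apply Finset.prod_le_prod'
        intro i _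
        rw [Finset.card_powersetCard, Finset.card_univ, Fintype.card_fin]
        exact Nat.choose_le_pow _ _
    _ = m ^ (∑ i, c i) := Finset.prod_pow_eq_pow_sum _ _ _

lemma choose_mono_le_half {n : ℕ} :
    ∀ b, b ≤ n / 2 → ∀ a, a ≤ b → n.choose a ≤ n.choose b := by
  intro b
  induction b with
  | zero =>
    intro _ a hab
    have : a = 0 := Nat.le_zero.mp hab
    simp [this]
  | succ b ih =>
    intro hb a hab
    rcases Nat.eq_or_lt_of_le hab with rfl | h
    · exact le_rfl
    · exact (ih (by omega) a (by omega)).trans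
        (Nat.choose_le_succ_of_lt_half_left (by omega))

lemma desc_bound (t : ℕ) : ∀ j, j ≤ t →
    Nat.descFactorial (13 * t) j ≤ 4 ^ j * Nat.descFactorial (4 * t) j := by
  intro j
  induction j with
  | zero => simp
  | succ j ih =>
    intro hj
    rw [Nat.descFactorial_succ, Nat.descFactorial_succ, pow_succ]
    calc (13 * t - j) * Nat.descFactorial (13 * t) j
        ≤ (4 * (4 * t - j)) * (4 ^ j * Nat.descFactorial (4 * t) j) :=
          Nat.mul_le_mul (by omega) (ih (by omega))
      _ = 4 ^ j * 4 * ((4 * t - j) * Nat.descFactorial (4 * t) j) := by ring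

lemma choose_13_le (t : ℕ) :
    Nat.choose (13 * t) t ≤ 4 ^ t * Nat.choose (4 * t) t := by
  have h := desc_bound t t le_rfl
  have hd : Nat.factorial t ∣ Nat.descFactorial (4 * t) t :=
    Nat.factorial_dvd_descFactorial _ _
  rw [Nat.choose_eq_descFactorial_div_factorial, Nat.choose_eq_descFactorial_div_factorial,
    ← Nat.mul_div_assoc _ hd]
  exact Nat.div_le_div_right (h.trans le_rfl)

lemma key_numeric (t : ℕ) (ht : 1 ≤ t) :
    (4 * t + 1) * Nat.choose (16 * t) (4 * t)
      ≤ 4096 * t ^ 3 * Nat.choose (2 * t) t * Nat.choose (16 * t) (3 * t) := by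
  have hpos : 0 < Nat.choose (4 * t) t := Nat.choose_pos (by omega)
  apply Nat.le_of_mul_le_mul_right _ hpos
  have hid : Nat.choose (16 * t) (4 * t) * Nat.choose (4 * t) (3 * t)
      = Nat.choose (16 * t) (3 * t) * Nat.choose (13 * t) t := by
    have := Nat.choose_mul (n := 16 * t) (k := 4 * t) (s := 3 * t) (by omega)
    have e1 : 16 * t - 3 * t = 13 * t := by omega
    have e2 : 4 * t - 3 * t = t := by omega
    rw [e1, e2] at this
    exact this
  have hsymm : Nat.choose (4 * t) (3 * t) = Nat.choose (4 * t) t := by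
    have : Nat.choose (4 * t) (4 * t - t) = Nat.choose (4 * t) t :=
      Nat.choose_symm (by omega)
    have e : 4 * t - t = 3 * t := by omega
    rwa [e] at this
  calc (4 * t + 1) * Nat.choose (16 * t) (4 * t) * Nat.choose (4 * t) t
      = (4 * t + 1) * (Nat.choose (16 * t) (4 * t) * Nat.choose (4 * t) (3 * t)) := by
        rw [hsymm]; ring
    _ = (4 * t + 1) * (Nat.choose (16 * t) (3 * t) * Nat.choose (13 * t) t) := by rw [hid]
    _ ≤ (4 * t + 1) * (Nat.choose (16 * t) (3 * t) * (4 ^ t * Nat.choose (4 * t) t)) := by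
        exact Nat.mul_le_mul_left _ (Nat.mul_le_mul_left _ (choose_13_le t))
    _ ≤ (4 * t + 1) * (Nat.choose (16 * t) (3 * t) *
          ((2 * t * Nat.choose (2 * t) t) * Nat.choose (4 * t) t)) := by
        refine Nat.mul_le_mul_left _ (Nat.mul_le_mul_left _ (Nat.mul_le_mul_right _ ?_))
        have := Nat.four_pow_le_two_mul_self_mul_centralBinom t ht
        rwa [Nat.centralBinom] at this
    _ = ((4 * t + 1) * (2 * t)) *
          (Nat.choose (2 * t) t * Nat.choose (16 * t) (3 * t) * Nat.choose (4 * t) t) := by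
        ring
    _ ≤ (4096 * t ^ 3) *
          (Nat.choose (2 * t) t * Nat.choose (16 * t) (3 * t) * Nat.choose (4 * t) t) := by
        refine Nat.mul_le_mul_right _ ?_
        calc (4 * t + 1) * (2 * t) ≤ (5 * t) * (2 * t) := Nat.mul_le_mul_right _ (by omega)
          _ = 10 * (t * t) := by ring
          _ ≤ 4096 * (t * t * t) := Nat.mul_le_mul (by omega) (Nat.le_mul_of_pos_right _ ht)
          _ = 4096 * t ^ 3 := by ring
    _ = 4096 * t ^ 3 * Nat.choose (2 * t) t * Nat.choose (16 * t) (3 * t)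
          * Nat.choose (4 * t) t := by ring

def ccFun {k m : ℕ} (D : Finset (Fin k)) (U : Finset (Fin k × Fin m)) (i : Fin k) : ℕ :=
  (if i ∈ D then 1 else 0) + blockCount U i

/-- Lemma 3.8: for `k ≥ 16` divisible by `16`, `m ≥ 2k`, and one-per-block
subsets `S₁, S₂` with `|S₁ Δ S₂| > k/8`, the number of `P ∈ Q(k,m)` with
`|P Δ S₁| ≤ k` and `|P Δ S₂| ≤ k` is at most
`k³ * C(k/8, k/16) * C(k, 3k/16) * C(k, k/2) * m^(3k/4)`. -/
theorem card_intersection_balls_le (k m : ℕ) (hk : 16 ≤ k) (hdvd : 16 ∣ k)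
    (hm : 2 * k ≤ m)
    (S₁ S₂ : Finset (Fin k × Fin m))
    (h1 : OnePerBlock S₁) (h2 : OnePerBlock S₂)
    (hsep : k / 8 < (symmDiff S₁ S₂).card) :
    ((QFamily k m).filter fun P =>
        (symmDiff P S₁).card ≤ k ∧ (symmDiff P S₂).card ≤ k).card ≤
      k ^ 3 * Nat.choose (k / 8) (k / 16) * Nat.choose k (3 * k / 16) *
        Nat.choose k (k / 2) * m ^ (3 * k / 4) := by
  classical
  obtain ⟨t, rfl⟩ := hdvd
  have ht : 1 ≤ t := by omega
  have hm1 : 1 ≤ m := by omega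
  have e2 : 16 * t / 2 = 8 * t := by omega
  have e8 : 16 * t / 8 = 2 * t := by omega
  have e16 : 16 * t / 16 = t := by omega
  have e316 : 3 * (16 * t) / 16 = 3 * t := by omega
  have e34 : 3 * (16 * t) / 4 = 12 * t := by omega
  rw [e8, e16, e316, e34, e2]
  have hS₁card : S₁.card = 16 * t := by
    rw [← sum_blockCount, Finset.sum_congr rfl fun i _ => h1 i]
    simp
  -- drop the S₂ condition
  have hsub : ((QFamily (16 * t) m).filter fun P =>
        (symmDiff P S₁).card ≤ 16 * t ∧ (symmDiff P S₂).card ≤ 16 * t)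
      ⊆ ((QFamily (16 * t) m).filter fun P => (symmDiff P S₁).card ≤ 16 * t) := by
    intro P hP
    simp only [Finset.mem_filter] at hP ⊢
    exact ⟨hP.1, hP.2.1⟩
  refine (Finset.card_le_card hsub).trans ?_
  -- the encoding target
  have hinj : ((QFamily (16 * t) m).filter fun P => (symmDiff P S₁).card ≤ 16 * t).card
      ≤ ((Finset.univ.powersetCard (8 * t) : Finset (Finset (Fin (16 * t)))).sigma fun D =>
          (S₁.powerset.filter fun U => U.card ≤ 4 * t).sigma fun U =>
            Finset.univ.filter fun F : Finset (Fin (16 * t) × Fin m) =>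
              ∀ i, blockCount F i = ccFun D U i).card := by
    apply Finset.card_le_card_of_injOn
      (fun P => ⟨Finset.univ.filter fun i => blockCount P i = 2, S₁ \ P, P \ S₁⟩)
    · intro P hP
      simp only [Finset.mem_coe, Finset.mem_filter, QFamily, Finset.mem_univ, true_and] at hP
      obtain ⟨⟨hone, hall⟩, hdist⟩ := hP
      rw [e2] at hone
      have hfilt : (Finset.univ.filter fun i => ¬ blockCount P i = 1)
          = (Finset.univ.filter fun i => blockCount P i = 2) := by
        apply Finset.filter_congr
        intro i _
        rcases hall i with h | h <;> simp [h]
      have hDcard : (Finset.univ.filter fun i => blockCount P i = 2).card = 8 * t := by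
        have hpart := Finset.card_filter_add_card_filter_not
          (s := (Finset.univ : Finset (Fin (16 * t)))) (p := fun i => blockCount P i = 1)
        rw [hfilt, hone, Finset.card_univ, Fintype.card_fin] at hpart
        omega
      have hPcard : P.card = 24 * t := by
        rw [← sum_blockCount P,
          ← Finset.sum_filter_add_sum_filter_not Finset.univ (fun i => blockCount P i = 1)]
        have hs1 : ∑ i ∈ Finset.univ.filter (fun i => blockCount P i = 1), blockCount P i
            = 8 * t := by
          rw [Finset.sum_congr rfl (fun i hi => (Finset.mem_filter.mp hi).2), Finset.sum_const,
            hone, smul_eq_mul, mul_one]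
        have hs2 : ∑ i ∈ Finset.univ.filter (fun i => ¬ blockCount P i = 1), blockCount P i
            = 16 * t := by
          rw [hfilt, Finset.sum_congr rfl (fun i hi => (Finset.mem_filter.mp hi).2),
            Finset.sum_const, hDcard, smul_eq_mul]
          omega
        omega
      have hsd : (symmDiff P S₁).card = (P \ S₁).card + (S₁ \ P).card := by
        rw [symmDiff_def, Finset.sup_eq_union]
        exact Finset.card_union_of_disjoint disjoint_sdiff_sdiff
      have hx1 := Finset.card_sdiff_add_card_inter P S₁
      have hx2 := Finset.card_sdiff_add_card_inter S₁ P
      have hxc : (P ∩ S₁).card = (S₁ ∩ P).card := by rw [Finset.inter_comm]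
      have hU : (S₁ \ P).card ≤ 4 * t := by omega
      rw [Finset.mem_coe, Finset.mem_sigma]
      refine ⟨Finset.mem_powersetCard.mpr ⟨Finset.subset_univ _, hDcard⟩, ?_⟩
      rw [Finset.mem_sigma]
      refine ⟨Finset.mem_filter.mpr ⟨Finset.mem_powerset.mpr Finset.sdiff_subset, hU⟩, ?_⟩
      simp only [Finset.mem_filter, Finset.mem_univ, true_and]
      intro i
      have hb : blockCount S₁ i = 1 := h1 i
      have hf1 : blockCount (P \ S₁) i
          = ((P.filter fun p => p.1 = i) \ (S₁.filter fun p => p.1 = i)).card := by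
        unfold blockCount
        rw [filter_block_sdiff]
      have hf2 : blockCount (S₁ \ P) i
          = ((S₁.filter fun p => p.1 = i) \ (P.filter fun p => p.1 = i)).card := by
        unfold blockCount
        rw [filter_block_sdiff]
      have hy1 := Finset.card_sdiff_add_card_inter (P.filter fun p => p.1 = i)
        (S₁.filter fun p => p.1 = i)
      have hy2 := Finset.card_sdiff_add_card_inter (S₁.filter fun p => p.1 = i)
        (P.filter fun p => p.1 = i)
      have hyc : ((P.filter fun p => p.1 = i) ∩ (S₁.filter fun p => p.1 = i)).card
          = ((S₁.filter fun p => p.1 = i) ∩ (P.filter fun p => p.1 = i)).card := by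
        rw [Finset.inter_comm]
      unfold ccFun
      rw [hf1, hf2]
      by_cases hD : i ∈ Finset.univ.filter fun j => blockCount P j = 2
      · have hP2 : blockCount P i = 2 := (Finset.mem_filter.mp hD).2
        rw [if_pos hD]
        unfold blockCount at hP2 hb
        omega
      · have hP1 : blockCount P i = 1 := by
          rcases hall i with h | h
          · exact h
          · simp only [Finset.mem_filter, Finset.mem_univ, true_and] at hD
            exact absurd h hD
        rw [if_neg hD]
        unfold blockCount at hP1 hb
        omega
    · intro P hP P' hP' h
      simp only [Sigma.mk.inj_iff, heq_eq_eq] at h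
      obtain ⟨-, hq2, hq3⟩ := h
      ext x
      by_cases hx : x ∈ S₁
      · have e2' := Finset.ext_iff.mp hq2 x
        simp only [Finset.mem_sdiff, hx, true_and] at e2'
        tauto
      · have e3' := Finset.ext_iff.mp hq3 x
        simp only [Finset.mem_sdiff, hx, not_false_iff, and_true] at e3'
        tauto
  refine hinj.trans ?_
  simp only [Finset.card_sigma]
  have hBcard : (S₁.powerset.filter fun U => U.card ≤ 4 * t).card
      ≤ (4 * t + 1) * Nat.choose (16 * t) (4 * t) := by
    have hsub2 : (S₁.powerset.filter fun U => U.card ≤ 4 * t)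
        ⊆ (Finset.range (4 * t + 1)).biUnion (fun j => S₁.powersetCard j) := by
      intro U hU
      simp only [Finset.mem_filter, Finset.mem_powerset] at hU
      rw [Finset.mem_biUnion]
      exact ⟨U.card, Finset.mem_range.mpr (by omega),
        Finset.mem_powersetCard.mpr ⟨hU.1, rfl⟩⟩
    refine (Finset.card_le_card hsub2).trans ?_
    refine Finset.card_biUnion_le.trans ?_
    have hj : ∀ j ∈ Finset.range (4 * t + 1),
        (S₁.powersetCard j).card ≤ Nat.choose (16 * t) (4 * t) := by
      intro j hj
      rw [Finset.card_powersetCard, hS₁card]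
      refine choose_mono_le_half (4 * t) (by omega) j ?_
      have := Finset.mem_range.mp hj
      omega
    refine (Finset.sum_le_card_nsmul _ _ _ hj).trans ?_
    rw [Finset.card_range, smul_eq_mul]
  have hDsum : ∀ D ∈ (Finset.univ.powersetCard (8 * t) : Finset (Finset (Fin (16 * t)))),
      (∑ U ∈ S₁.powerset.filter (fun U => U.card ≤ 4 * t),
        (Finset.univ.filter fun F : Finset (Fin (16 * t) × Fin m) =>
          ∀ i, blockCount F i = ccFun D U i).card)
      ≤ ((4 * t + 1) * Nat.choose (16 * t) (4 * t)) * m ^ (12 * t) := by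
    intro D hD
    have hDc : D.card = 8 * t := (Finset.mem_powersetCard.mp hD).2
    have hterm : ∀ U ∈ S₁.powerset.filter (fun U => U.card ≤ 4 * t),
        (Finset.univ.filter fun F : Finset (Fin (16 * t) × Fin m) =>
          ∀ i, blockCount F i = ccFun D U i).card ≤ m ^ (12 * t) := by
      intro U hU
      have hUc : U.card ≤ 4 * t := (Finset.mem_filter.mp hU).2
      refine (card_fixed_blockCounts _).trans ?_
      apply Nat.pow_le_pow_right hm1
      have hcsum : ∑ i, ccFun D U i = D.card + U.card := by
        unfold ccFun
        rw [Finset.sum_add_distrib, sum_blockCount]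
        congr 1
        rw [Finset.sum_ite_mem, Finset.univ_inter, Finset.sum_const, smul_eq_mul, mul_one]
      omega
    refine (Finset.sum_le_card_nsmul _ _ _ hterm).trans ?_
    rw [smul_eq_mul]
    exact Nat.mul_le_mul_right _ hBcard
  refine (Finset.sum_le_card_nsmul _ _ _ hDsum).trans ?_
  rw [smul_eq_mul, Finset.card_powersetCard, Finset.card_univ, Fintype.card_fin]
  have hkey := key_numeric t ht
  calc Nat.choose (16 * t) (8 * t) * ((4 * t + 1) * Nat.choose (16 * t) (4 * t) * m ^ (12 * t))
      = ((4 * t + 1) * Nat.choose (16 * t) (4 * t))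
          * (Nat.choose (16 * t) (8 * t) * m ^ (12 * t)) := by ring
    _ ≤ (4096 * t ^ 3 * Nat.choose (2 * t) t * Nat.choose (16 * t) (3 * t))
          * (Nat.choose (16 * t) (8 * t) * m ^ (12 * t)) := Nat.mul_le_mul_right _ hkey
    _ = (16 * t) ^ 3 * Nat.choose (2 * t) t * Nat.choose (16 * t) (3 * t) *
          Nat.choose (16 * t) (8 * t) * m ^ (12 * t) := by ring
end

section
/- For every k ≥ 1, m ≥ 1 and radius r : ℕ, there exists a family F of one-per-block subsets of Fin k × Fin m such that any two distinct members S, S' of F satisfy |S Δ S'| > r, and |F| · (Σ_{i=0}^{r} C(k·m, i)) ≥ m^k. (Deterministic form of Properties 1 and 2 of Lemma 3.3: existence of a large code of one-per-block strings with pairwise Hamming distance greater than r, of size at least m^k divided by the size of a Hamming ball of radius r.) -/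
section Aux
open Finset

lemma ball_card_aux {k m : ℕ} (r : ℕ) (T : Finset (Fin k × Fin m)) :
    (univ.filter fun S : Finset (Fin k × Fin m) => (symmDiff S T).card ≤ r).card
      ≤ ∑ i ∈ range (r + 1), Nat.choose (k * m) i := by
  have h1 : (univ.filter fun S : Finset (Fin k × Fin m) => (symmDiff S T).card ≤ r).card
      ≤ (univ.filter fun U : Finset (Fin k × Fin m) => U.card ≤ r).card := by
    apply card_le_card_of_injOn (fun S => symmDiff S T)
    · intro S hS
      simp only [mem_coe, mem_filter, mem_univ, true_and] at hS ⊢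
      exact hS
    · intro S _ S' _ h
      have := congrArg (fun U => symmDiff U T) h
      simpa using this
  refine h1.trans ?_
  have h2 : (univ.filter fun U : Finset (Fin k × Fin m) => U.card ≤ r).card
      = ∑ i ∈ range (r + 1), ((univ.filter fun U : Finset (Fin k × Fin m) => U.card ≤ r).filter
        fun U => U.card = i).card := by
    apply card_eq_sum_card_fiberwise
    intro U hU
    simp only [mem_coe, mem_filter, mem_univ, true_and] at hU
    simpa [Nat.lt_succ_iff] using hU
  rw [h2]
  apply Finset.sum_le_sum
  intro i hi
  simp only [mem_range, Nat.lt_succ_iff] at hi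
  have : ((univ.filter fun U : Finset (Fin k × Fin m) => U.card ≤ r).filter
        fun U => U.card = i) = Finset.powersetCard i univ := by
    ext U
    simp only [mem_filter, mem_univ, true_and, Finset.mem_powersetCard, subset_univ, true_and]
    constructor
    · exact fun h => h.2
    · intro h; exact ⟨h ▸ hi, h⟩
  rw [this, Finset.card_powersetCard]
  simp [Fintype.card_prod]

lemma count_opb_aux {k m : ℕ} :
    m ^ k ≤ (univ.filter fun S : Finset (Fin k × Fin m) => OnePerBlock S).card := by
  have := Finset.card_le_card_of_injOn
    (f := fun f : Fin k → Fin m => Finset.image (fun i => (i, f i)) univ)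
    (s := (univ : Finset (Fin k → Fin m)))
    (t := univ.filter fun S : Finset (Fin k × Fin m) => OnePerBlock S)
    ?_ ?_
  · simpa [Fintype.card_fun] using this
  · intro f _
    simp only [mem_coe, mem_filter, mem_univ, true_and]
    intro i
    have : ((Finset.image (fun j => (j, f j)) univ).filter fun p : Fin k × Fin m => p.1 = i)
        = {(i, f i)} := by
      ext ⟨a, b⟩
      simp only [mem_filter, Finset.mem_image, mem_univ, true_and, Finset.mem_singleton,
        Prod.mk.injEq]
      aesop
    rw [blockCount, this, Finset.card_singleton]
  · intro f _ g _ h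
    funext i
    have : (i, f i) ∈ Finset.image (fun j => (j, g j)) univ := by
      simp only at h
      rw [← h]; exact Finset.mem_image_of_mem _ (mem_univ i)
    simp only [Finset.mem_image, mem_univ, true_and, Prod.mk.injEq] at this
    obtain ⟨j, rfl, hj⟩ := this
    exact hj.symm

end Aux

/-- Deterministic form of Properties 1 and 2 of Lemma 3.3: for all `k, m ≥ 1`
and any radius `r`, there is a family `F` of one-per-block subsets of
`Fin k × Fin m`, any two distinct members of which are at Hamming distance
greater than `r`, with `|F| * (Σ_{i ≤ r} C(k*m, i)) ≥ m^k`. -/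
theorem exists_code_one_per_block (k m : ℕ) (hk : 1 ≤ k) (hm : 1 ≤ m) (r : ℕ) :
    ∃ F : Finset (Finset (Fin k × Fin m)),
      (∀ S ∈ F, OnePerBlock S) ∧
      (∀ S ∈ F, ∀ S' ∈ F, S ≠ S' → r < (symmDiff S S').card) ∧
      m ^ k ≤ F.card * ∑ i ∈ Finset.range (r + 1), Nat.choose (k * m) i := by
  classical
  open Finset in
  set A : Finset (Finset (Fin k × Fin m)) := univ.filter fun S => OnePerBlock S with hA
  set cand : Finset (Finset (Finset (Fin k × Fin m))) :=
    A.powerset.filter fun F => ∀ S ∈ F, ∀ S' ∈ F, S ≠ S' → r < (symmDiff S S').card with hcand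
  have hne : cand.Nonempty := ⟨∅, by simp [hcand]⟩
  obtain ⟨F, hF, hmax⟩ := cand.exists_maximal hne
  simp only [hcand, mem_filter, Finset.mem_powerset] at hF
  obtain ⟨hFA, hFdist⟩ := hF
  refine ⟨F, fun S hS => by
    have := hFA hS; simp only [hA, mem_filter] at this; exact this.2, hFdist, ?_⟩
  -- covering argument
  have hcover : ∀ S ∈ A, ∃ T ∈ F, (symmDiff S T).card ≤ r := by
    intro S hSA
    by_cases hSF : S ∈ F
    · exact ⟨S, hSF, by simp⟩
    by_contra hcon
    push_neg at hcon
    apply hSF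
    apply hmax (y := insert S F) ?_ ?_ (Finset.mem_insert_self S F)
    · simp only [hcand, mem_filter, Finset.mem_powerset]
      constructor
      · exact Finset.insert_subset hSA hFA
      · intro T hT T' hT' hne'
        rcases Finset.mem_insert.mp hT with hTe | hT <;>
          rcases Finset.mem_insert.mp hT' with hTe' | hT'
        · exact absurd (hTe.trans hTe'.symm) hne'
        · rw [hTe]; exact hcon T' hT'
        · rw [hTe', symmDiff_comm]; exact hcon T hT
        · exact hFdist T hT T' hT' hne'
    · exact Finset.subset_insert S F
  -- counting
  have hsub : A ⊆ F.biUnion fun T => univ.filter fun S => (symmDiff S T).card ≤ r := by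
    intro S hS
    obtain ⟨T, hT, hd⟩ := hcover S hS
    exact Finset.mem_biUnion.mpr ⟨T, hT, by simp [hd]⟩
  calc m ^ k ≤ A.card := count_opb_aux
    _ ≤ (F.biUnion fun T => univ.filter fun S => (symmDiff S T).card ≤ r).card :=
        Finset.card_le_card hsub
    _ ≤ ∑ T ∈ F, (univ.filter fun S => (symmDiff S T).card ≤ r).card :=
        Finset.card_biUnion_le
    _ ≤ ∑ _T ∈ F, ∑ i ∈ Finset.range (r + 1), Nat.choose (k * m) i :=
        Finset.sum_le_sum fun T _ => ball_card_aux r T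
    _ = F.card * ∑ i ∈ Finset.range (r + 1), Nat.choose (k * m) i := by
        rw [Finset.sum_const, smul_eq_mul]
end

section
/- Let k, d : ℕ → ℕ be sequences with 1 ≤ k(n) ≤ d(n) for all n, (n : ℝ) ≤ d(n) · (d(n)/k(n))^{k(n)} for all n, and k(n)/log n → 0 as n → ∞. Then log(log n / k(n)) / log(d(n)/k(n)) → 0 as n → ∞ (with real logarithms; in particular the denominator is eventually positive). (Claim 3.4: the exponent α = log_{d/k}(log n / k) tends to zero when |D| ≤ (d/k)^k and k = o(log n).) -/
open Filter

/-- Claim 3.4: if `1 ≤ k n ≤ d n`, `n ≤ d n * (d n / k n)^(k n)`, and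
`k n = o(log n)`, then the exponent `α = log_{d/k}(log n / k)` tends to zero;
in particular the denominator `log (d n / k n)` is eventually positive. -/
theorem alpha_tendsto_zero (k d : ℕ → ℕ)
    (hk1 : ∀ n, 1 ≤ k n) (hkd : ∀ n, k n ≤ d n)
    (hn : ∀ n : ℕ, (n : ℝ) ≤ (d n : ℝ) * ((d n : ℝ) / (k n : ℝ)) ^ (k n))
    (hko : Tendsto (fun n : ℕ => (k n : ℝ) / Real.log n) atTop (nhds 0)) :
    Tendsto
        (fun n : ℕ =>
          Real.log (Real.log n / (k n : ℝ)) / Real.log ((d n : ℝ) / (k n : ℝ)))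
        atTop (nhds 0) ∧
      ∀ᶠ n : ℕ in atTop, 0 < Real.log ((d n : ℝ) / (k n : ℝ)) := by
  have hlog : Tendsto (fun n : ℕ => Real.log n) atTop atTop :=
    Real.tendsto_log_atTop.comp tendsto_natCast_atTop_atTop
  -- log n / k n → ∞
  have hpos : ∀ᶠ n : ℕ in atTop, 0 < (k n : ℝ) / Real.log n := by
    filter_upwards [hlog.eventually_gt_atTop 0] with n hn0
    exact div_pos (by exact_mod_cast hk1 n) hn0
  have hy : Tendsto (fun n : ℕ => Real.log n / (k n : ℝ)) atTop atTop := by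
    have := (tendsto_nhdsWithin_iff.2 ⟨hko, hpos⟩).inv_tendsto_nhdsGT_zero
    refine this.congr fun n => ?_
    simp [Pi.inv_apply, inv_div]
  -- log x / x → 0
  have hlogdiv : Tendsto (fun x : ℝ => Real.log x / x) atTop (nhds 0) :=
    Real.isLittleO_log_id_atTop.tendsto_div_nhds_zero
  have hbound : Tendsto (fun n : ℕ =>
      4 * (Real.log (Real.log n / (k n : ℝ)) / (Real.log n / (k n : ℝ)))) atTop (nhds 0) := by
    have := (hlogdiv.comp hy).const_mul (4:ℝ)
    simpa using this
  -- good events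
  have hE3 : ∀ᶠ x : ℝ in atTop, Real.log x ≤ x / 2 := by
    have h2 : Tendsto (fun x : ℝ => Real.log x / x) atTop (nhds 0) := hlogdiv
    filter_upwards [h2.eventually (gt_mem_nhds (by norm_num : (0:ℝ) < 1/2)),
      eventually_gt_atTop (0:ℝ)] with x hx hx0
    calc Real.log x = Real.log x / x * x := by field_simp
    _ ≤ 1/2 * x := by nlinarith [le_of_lt hx]
    _ = x / 2 := by ring
  have key : ∀ᶠ n : ℕ in atTop,
      (0 < Real.log ((d n : ℝ) / (k n : ℝ)) ∧
       0 ≤ Real.log (Real.log n / (k n : ℝ)) / Real.log ((d n : ℝ) / (k n : ℝ))) ∧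
      Real.log (Real.log n / (k n : ℝ)) / Real.log ((d n : ℝ) / (k n : ℝ)) ≤
        4 * (Real.log (Real.log n / (k n : ℝ)) / (Real.log n / (k n : ℝ))) := by
    filter_upwards [hlog.eventually_gt_atTop 2, hy.eventually_ge_atTop 3,
      hlog.eventually hE3, eventually_ge_atTop 1] with n ht2 hy3 hE3n hn1
    set K : ℝ := (k n : ℝ) with hK
    set D : ℝ := (d n : ℝ) with hD
    set t : ℝ := Real.log n with hT
    have hK1 : (1:ℝ) ≤ K := by rw [hK]; exact_mod_cast hk1 n
    have hK0 : (0:ℝ) < K := by linarith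
    have hDK : K ≤ D := by rw [hK, hD]; exact_mod_cast hkd n
    have hr1 : (1:ℝ) ≤ D / K := (one_le_div hK0).2 hDK
    have hr0 : (0:ℝ) < D / K := by linarith
    have hD0 : (0:ℝ) < D := lt_of_lt_of_le hK0 hDK
    have hkt : K ≤ t := by
      have := (le_div_iff₀ hK0).1 hy3
      nlinarith
    -- log n ≤ log K + (k+1) log r
    have hlogn : t ≤ Real.log K + (k n + 1) * Real.log (D / K) := by
      have hn0 : (0:ℝ) < (n:ℝ) := by exact_mod_cast hn1
      have h1 : t ≤ Real.log (D * (D / K) ^ (k n)) := Real.log_le_log hn0 (hn n)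
      rw [Real.log_mul hD0.ne' (pow_ne_zero _ hr0.ne'), Real.log_pow] at h1
      have hDeq : Real.log D = Real.log K + Real.log (D / K) := by
        rw [← Real.log_mul hK0.ne' hr0.ne']
        congr 1
        field_simp
      linarith
    have hlogK : Real.log K ≤ t / 2 := by
      calc Real.log K ≤ Real.log t := Real.log_le_log hK0 hkt
      _ ≤ t / 2 := hE3n
    have hstep : t / 2 ≤ (k n + 1) * Real.log (D / K) := by linarith
    have hk2 : ((k n : ℝ) + 1) ≤ 2 * K := by
      have : (1:ℝ) ≤ K := hK1
      linarith
    have hlr0 : 0 < Real.log (D / K) := by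
      by_contra h
      push_neg at h
      have : ((k n : ℝ) + 1) * Real.log (D / K) ≤ 0 :=
        mul_nonpos_of_nonneg_of_nonpos (by positivity) h
      linarith
    have hlr : t / (4 * K) ≤ Real.log (D / K) := by
      rw [div_le_iff₀ (by positivity)]
      calc t = 2 * (t/2) := by ring
      _ ≤ 2 * ((k n + 1) * Real.log (D / K)) := by linarith
      _ ≤ 2 * (2 * K * Real.log (D / K)) := by nlinarith
      _ = Real.log (D / K) * (4 * K) := by ring
    have hN0 : 0 ≤ Real.log (t / K) :=
      Real.log_nonneg (by linarith)
    refine ⟨⟨hlr0, div_nonneg hN0 hlr0.le⟩, ?_⟩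
    have h4 : 4 * (Real.log (t / K) / (t / K)) = Real.log (t / K) / (t / (4 * K)) := by
      rw [div_div_eq_mul_div, div_div_eq_mul_div]
      ring
    rw [h4]
    exact div_le_div_of_nonneg_left hN0 (by positivity) hlr
  constructor
  · refine tendsto_of_tendsto_of_tendsto_of_le_of_le' tendsto_const_nhds hbound ?_ ?_
    · filter_upwards [key] with n hn'; exact hn'.1.2
    · filter_upwards [key] with n hn'; exact hn'.2
  · filter_upwards [key] with n hn'; exact hn'.1.1
end

section
/- There exists d₀ such that for every d ≥ d₀ there is a binary string G of length 2d (a function G : Fin (2d) → Bool) with the following property: for every i with 3d ≤ 2i and i < 2d, the Hamming distance between the prefix of G of length i and the suffix of G of length i (i.e., the number of j < i with G(j) ≠ G(2d − i + j)) satisfies 2 · |{j < i : G(j) ≠ G(2d − i + j)}| ≥ d + 2. (Claim 4.2: existence of the gap string, proved by the probabilistic method.) -/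
open Finset

private lemma two_pow_block : ∀ q r : ℕ, r < 16 → 128 + 16*q + r < 2^(8+q) := by
  intro q
  induction q with
  | zero => intro r hr; norm_num; omega
  | succ q ih =>
    intro r hr
    have h := ih r hr
    have h2 : (16:ℕ) ≤ 2^(8+q) := by
      calc (16:ℕ) ≤ 2^8 := by norm_num
      _ ≤ 2^(8+q) := Nat.pow_le_pow_right (by norm_num) (by omega)
    have : 2^(8+(q+1)) = 2^(8+q) + 2^(8+q) := by ring
    omega

private lemma lt_pow_div16 {d : ℕ} (hd : 128 ≤ d) : d < 2^(d/16) := by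
  obtain ⟨q, r, hr, rfl⟩ : ∃ q r, r < 16 ∧ d = 128 + 16*q + r :=
    ⟨(d-128)/16, (d-128)%16, Nat.mod_lt _ (by norm_num), by omega⟩
  have h8 : (128 + 16*q + r)/16 = 8 + q := by omega
  rw [h8]; exact two_pow_block q r hr

private lemma numeric {d s : ℕ} (hd : 512 ≤ d) (hs1 : 1 ≤ s) (hs2 : 2*s ≤ d) :
    2*d * 2^s * 3^(2*d - s) * 2^((d+1)/2) < 2^(2*d + (2*d - s)) := by
  set n := 2*d - s with hn
  set m := (d+1)/2 with hm
  set q := n/5 with hq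
  have h3 : (3:ℕ)^n ≤ 2^(7 + 8*q) := by
    calc (3:ℕ)^n ≤ 3^(5*q+4) := Nat.pow_le_pow_right (by norm_num) (by omega)
    _ = 3^4 * (3^5)^q := by rw [pow_add, pow_mul, mul_comm]
    _ ≤ 2^7 * (2^8)^q := by
        exact Nat.mul_le_mul (by norm_num) (Nat.pow_le_pow_left (by norm_num) q)
    _ = 2^(7 + 8*q) := by rw [pow_add, pow_mul]
  have hdd : 2*d < 2^(d/16 + 1) := by
    have := lt_pow_div16 (d := d) (by omega)
    have : 2^(d/16 + 1) = 2 * 2^(d/16) := by ring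
    omega
  have hpos : 0 < 2^s * 3^n * 2^m := by positivity
  calc 2*d * 2^s * 3^n * 2^m = 2*d * (2^s * 3^n * 2^m) := by ring
  _ < 2^(d/16+1) * (2^s * 3^n * 2^m) := by
      exact Nat.mul_lt_mul_of_lt_of_le hdd (le_refl _) hpos
  _ ≤ 2^(d/16+1) * (2^s * 2^(7+8*q) * 2^m) := by
      apply Nat.mul_le_mul_left
      exact Nat.mul_le_mul_right _ (Nat.mul_le_mul_left _ h3)
  _ = 2^(d/16+1 + s + (7+8*q) + m) := by rw [← pow_add, ← pow_add, ← pow_add]; congr 1; omega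
  _ ≤ 2^(2*d + n) := Nat.pow_le_pow_right (by norm_num) (by omega)


private def ext2 (d : ℕ) (G : Fin (2*d) → Bool) (x : ℕ) : Bool :=
  if h : x < 2*d then G ⟨x, h⟩ else false

private def cnt (d : ℕ) (G : Fin (2*d) → Bool) (i : ℕ) : ℕ :=
  ((Finset.range i).filter fun j => ext2 d G j ≠ ext2 d G (2*d - i + j)).card

private lemma card_fin_range (i : ℕ) (p : Fin i → Prop) (q : ℕ → Prop)
    [DecidablePred p] [DecidablePred q] (hpq : ∀ j : Fin i, p j ↔ q j.1) :
    ((Finset.univ : Finset (Fin i)).filter p).card = ((Finset.range i).filter q).card := by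
  rw [Finset.card_filter, Finset.card_filter]
  rw [show (∑ j : Fin i, if p j then 1 else 0) = ∑ j : Fin i, if q j.1 then 1 else 0 by
    apply Finset.sum_congr rfl; intro j _; simp [hpq j]]
  exact Fin.sum_univ_eq_sum_range (fun j => if q j then 1 else 0) i

/-- reconstruction: prefix of length s plus difference string determine G -/
private lemma ext2_inj {d : ℕ} {G G' : Fin (2*d) → Bool} {s : ℕ} (hs : 1 ≤ s)
    (h1 : ∀ a, a < s → ext2 d G a = ext2 d G' a)
    (h2 : ∀ j, j < 2*d - s → (ext2 d G j != ext2 d G (s+j)) = (ext2 d G' j != ext2 d G' (s+j))) :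
    G = G' := by
  have key : ∀ x, ext2 d G x = ext2 d G' x := by
    intro x
    induction x using Nat.strong_induction_on with
    | _ x ih =>
      rcases lt_or_ge x s with hx | hx
      · exact h1 x hx
      rcases lt_or_ge x (2*d) with hx2 | hx2
      · have hj : x - s < 2*d - s := by omega
        have e1 := h2 (x - s) hj
        have e2 := ih (x - s) (by omega)
        have hsx : s + (x - s) = x := by omega
        rw [hsx] at e1
        revert e1 e2
        cases ext2 d G (x-s) <;> cases ext2 d G' (x-s) <;>
          cases ext2 d G x <;> cases ext2 d G' x <;> simp
      · simp [ext2, Nat.not_lt.mpr hx2]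
  funext x
  have := key x.1
  simpa [ext2, x.2] using this

/-- the weight-tail bound: #{D : Fin n → Bool, wt D ≤ m} * 2^(n-m) ≤ 3^n -/
private lemma weight_tail (n m : ℕ) (hm : m ≤ n) :
    ((Finset.univ : Finset (Fin n → Bool)).filter
      fun D => (Finset.univ.filter fun j => D j = true).card ≤ m).card * 2^(n-m) ≤ 3^n := by
  set K := ((Finset.univ : Finset (Fin n → Bool)).filter
      fun D => (Finset.univ.filter fun j => D j = true).card ≤ m) with hK
  -- inject into finsets of card ≤ m
  have hinj : K.card ≤ ∑ k ∈ Finset.range (m+1), n.choose k := by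
    have h1 : K.card ≤ ((Finset.range (m+1)).biUnion
        (fun k => Finset.powersetCard k (Finset.univ : Finset (Fin n)))).card := by
      apply Finset.card_le_card_of_injOn (fun D => Finset.univ.filter fun j => D j = true)
      · intro D hD
        rw [Finset.mem_coe, hK, Finset.mem_filter] at hD
        rw [Finset.mem_coe, Finset.mem_biUnion]
        exact ⟨_, Finset.mem_range.mpr (Nat.lt_succ_of_le hD.2),
          Finset.mem_powersetCard_univ.mpr rfl⟩
      · intro D _ D' _ h
        funext j
        have := Finset.ext_iff.mp h j
        simp only [Finset.mem_filter, Finset.mem_univ, true_and] at this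
        cases hj : D j <;> cases hj' : D' j <;> simp_all
    refine h1.trans ?_
    refine (Finset.card_biUnion_le).trans ?_
    apply Finset.sum_le_sum
    intro k _
    rw [Finset.card_powersetCard, Finset.card_univ, Fintype.card_fin]
  calc K.card * 2^(n-m) ≤ (∑ k ∈ Finset.range (m+1), n.choose k) * 2^(n-m) :=
        Nat.mul_le_mul_right _ hinj
  _ = ∑ k ∈ Finset.range (m+1), n.choose k * 2^(n-m) := by rw [Finset.sum_mul]
  _ ≤ ∑ k ∈ Finset.range (m+1), 1^k * 2^(n-k) * n.choose k := by
      apply Finset.sum_le_sum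
      intro k hk
      rw [Finset.mem_range] at hk
      rw [one_pow, one_mul, mul_comm (2^(n-k)) (n.choose k)]
      exact Nat.mul_le_mul_left _ (Nat.pow_le_pow_right (by norm_num) (by omega))
  _ ≤ ∑ k ∈ Finset.range (n+1), 1^k * 2^(n-k) * n.choose k := by
      apply Finset.sum_le_sum_of_subset
      apply Finset.range_subset_range.mpr; omega
  _ = 3^n := by rw [show (3:ℕ) = 1 + 2 from rfl, add_pow]; simp

private lemma bad_card {d i : ℕ} (hd : 512 ≤ d) (h1 : 3*d ≤ 2*i) (h2 : i < 2*d) :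
    2*d * ((Finset.univ : Finset (Fin (2*d) → Bool)).filter
      fun G => 2 * cnt d G i < d + 2).card < 2^(2*d) := by
  set s := 2*d - i with hs
  set m := (d+1)/2 with hm
  have hsi : 2*d - s = i := by omega
  have hs1 : 1 ≤ s := by omega
  have hs2 : 2*s ≤ d := by omega
  have hmi : m ≤ i := by omega
  set K := ((Finset.univ : Finset (Fin i → Bool)).filter
      fun D => (Finset.univ.filter fun j => D j = true).card ≤ m) with hKdef
  -- Step A : injection into prefix × difference-string
  have hA : ((Finset.univ : Finset (Fin (2*d) → Bool)).filter
      fun G => 2 * cnt d G i < d + 2).card ≤ 2^s * K.card := by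
    have htarget : ((Finset.univ : Finset (Fin s → Bool)) ×ˢ K).card = 2^s * K.card := by
      rw [Finset.card_product, Finset.card_univ, Fintype.card_fun, Fintype.card_bool,
        Fintype.card_fin]
    rw [← htarget]
    apply Finset.card_le_card_of_injOn
      (fun G => (fun a : Fin s => ext2 d G a.1,
                 fun j : Fin i => ext2 d G j.1 != ext2 d G (s + j.1)))
    · intro G hG
      rw [Finset.mem_coe, Finset.mem_filter] at hG
      rw [Finset.mem_coe, Finset.mem_product]
      refine ⟨Finset.mem_univ _, ?_⟩
      rw [hKdef, Finset.mem_filter]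
      refine ⟨Finset.mem_univ _, ?_⟩
      have hcard : ((Finset.univ : Finset (Fin i)).filter
          fun j => (ext2 d G j.1 != ext2 d G (s + j.1)) = true).card = cnt d G i := by
        rw [cnt]
        apply card_fin_range
        intro j
        have : 2*d - i + j.1 = s + j.1 := by omega
        rw [this]
        simp [bne_iff_ne]
      rw [hcard]
      omega
    · intro G _ G' _ heq
      simp only [Prod.mk.injEq] at heq
      apply ext2_inj hs1
      · intro a ha
        exact congrFun heq.1 ⟨a, ha⟩
      · intro j hj
        rw [hsi] at hj
        exact congrFun heq.2 ⟨j, hj⟩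
  -- Step B : weight tail bound
  have hB : K.card * 2^(i-m) ≤ 3^i := weight_tail i m hmi
  -- Step C : numeric bound, with s rewritten
  have hC : 2*d * 2^s * 3^i * 2^m < 2^(2*d + i) := by
    have := numeric hd hs1 hs2
    rwa [hsi, ← hm] at this
  -- cancel 2^m
  have hC' : 2*d * 2^s * 3^i < 2^(2*d) * 2^(i-m) := by
    have he : 2^(2*d + i) = (2^(2*d) * 2^(i-m)) * 2^m := by
      rw [mul_assoc, ← pow_add, ← pow_add]
      congr 1
      omega
    rw [he] at hC
    exact Nat.lt_of_mul_lt_mul_right hC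
  -- combine
  have hfinal : (2*d * ((Finset.univ : Finset (Fin (2*d) → Bool)).filter
      fun G => 2 * cnt d G i < d + 2).card) * 2^(i-m) < (2^(2*d)) * 2^(i-m) := by
    calc (2*d * ((Finset.univ : Finset (Fin (2*d) → Bool)).filter
        fun G => 2 * cnt d G i < d + 2).card) * 2^(i-m)
        ≤ (2*d * (2^s * K.card)) * 2^(i-m) := by
          exact Nat.mul_le_mul_right _ (Nat.mul_le_mul_left _ hA)
    _ = (2*d * 2^s) * (K.card * 2^(i-m)) := by ring
    _ ≤ (2*d * 2^s) * 3^i := Nat.mul_le_mul_left _ hB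
    _ = 2*d * 2^s * 3^i := by ring
    _ < 2^(2*d) * 2^(i-m) := hC'
  exact Nat.lt_of_mul_lt_mul_right hfinal

/-- Claim 4.2 (existence of the gap string): there is `d₀` such that for every
`d ≥ d₀` there is a binary string `G` of length `2d` such that for every `i`
with `3d ≤ 2i` and `i < 2d`, the Hamming distance between the prefix and the
suffix of `G` of length `i` is at least `d/2 + 1`, i.e.
`2 * |{j < i : G j ≠ G (2d - i + j)}| ≥ d + 2`. -/
theorem exists_gap_string :
    ∃ d₀ : ℕ, ∀ d : ℕ, d₀ ≤ d →
      ∃ G : Fin (2 * d) → Bool,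
        ∀ (i : ℕ) (_h1 : 3 * d ≤ 2 * i) (h2 : i < 2 * d),
          d + 2 ≤ 2 * (Finset.univ.filter fun j : Fin i =>
            G ⟨j.1, by have := j.2; omega⟩ ≠
              G ⟨2 * d - i + j.1, by have := j.2; omega⟩).card := by
  refine ⟨512, fun d hd => ?_⟩
  set I := (Finset.range (2*d)).filter (fun i => 3*d ≤ 2*i) with hI
  set B := I.biUnion (fun i => (Finset.univ : Finset (Fin (2*d) → Bool)).filter
      fun G => 2 * cnt d G i < d + 2) with hB
  have hBcard : B.card < 2^(2*d) := by
    have h2d : 0 < 2*d := by omega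
    have hsum : B.card ≤ ∑ i ∈ I, ((Finset.univ : Finset (Fin (2*d) → Bool)).filter
        fun G => 2 * cnt d G i < d + 2).card := Finset.card_biUnion_le
    have hIcard : I.card ≤ 2*d := by
      calc I.card ≤ (Finset.range (2*d)).card := Finset.card_filter_le _ _
      _ = 2*d := Finset.card_range _
    have hmul : 2*d * B.card ≤ 2*d * (2^(2*d) - 1) := by
      calc 2*d * B.card ≤ 2*d * ∑ i ∈ I, ((Finset.univ : Finset (Fin (2*d) → Bool)).filter
          fun G => 2 * cnt d G i < d + 2).card := Nat.mul_le_mul_left _ hsum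
      _ = ∑ i ∈ I, 2*d * ((Finset.univ : Finset (Fin (2*d) → Bool)).filter
          fun G => 2 * cnt d G i < d + 2).card := Finset.mul_sum _ _ _
      _ ≤ ∑ _i ∈ I, (2^(2*d) - 1) := by
          apply Finset.sum_le_sum
          intro i hi
          rw [hI, Finset.mem_filter, Finset.mem_range] at hi
          have := bad_card hd hi.2 hi.1
          omega
      _ = I.card * (2^(2*d) - 1) := by rw [Finset.sum_const, smul_eq_mul]
      _ ≤ 2*d * (2^(2*d) - 1) := Nat.mul_le_mul_right _ hIcard
    have hB1 : B.card ≤ 2^(2*d) - 1 := Nat.le_of_mul_le_mul_left hmul h2d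
    have : 0 < 2^(2*d) := Nat.pow_pos (by norm_num)
    omega
  have huniv : (Finset.univ : Finset (Fin (2*d) → Bool)).card = 2^(2*d) := by
    rw [Finset.card_univ, Fintype.card_fun, Fintype.card_bool, Fintype.card_fin]
  have hne : ((Finset.univ : Finset (Fin (2*d) → Bool)) \ B).Nonempty := by
    rw [← Finset.card_pos, Finset.card_sdiff_of_subset (Finset.subset_univ _), huniv]
    omega
  obtain ⟨G, hG⟩ := hne
  rw [Finset.mem_sdiff] at hG
  refine ⟨G, fun i h1 h2 => ?_⟩
  have hGi : ¬ (2 * cnt d G i < d + 2) := by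
    intro hbad
    apply hG.2
    rw [hB]
    apply Finset.mem_biUnion.mpr
    refine ⟨i, ?_, ?_⟩
    · rw [hI, Finset.mem_filter, Finset.mem_range]; exact ⟨h2, h1⟩
    · rw [Finset.mem_filter]; exact ⟨Finset.mem_univ _, hbad⟩
  have hconv : (Finset.univ.filter fun j : Fin i =>
      G ⟨j.1, by have := j.2; omega⟩ ≠
        G ⟨2 * d - i + j.1, by have := j.2; omega⟩).card = cnt d G i := by
    rw [cnt]
    apply card_fin_range
    intro j
    have hj1 : j.1 < 2*d := by omega
    have hj2 : 2*d - i + j.1 < 2*d := by omega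
    simp [ext2, hj1, hj2]
  rw [hconv]
  omega
end

section
/- Let α be a type with decidable equality, let A, B ⊆ α be disjoint sets, let d ≥ 1, and let G be a list of length 2d with all entries in A satisfying the gap property: for every i with 3d ≤ 2i and i < 2d, twice the Hamming distance between the prefix of G of length i and the suffix of G of length i is at least d + 2. Let S₁, …, S_N (N ≥ 1) and Q be lists of length d with all entries in B, and let T = G ++ S₁ ++ G ++ S₂ ++ G ++ ⋯ ++ S_N ++ G. Then for every position p with p + 5d ≤ |T|: if the Hamming distance between the list G ++ Q ++ G and the length-5d window of T starting at p is strictly less than d, then this window equals G ++ S_i ++ G for some 1 ≤ i ≤ N (equivalently p = 3d·(i−1)), and consequently the Hamming distance between Q and S_i is at most that between G ++ Q ++ G and the window. (Combinatorial core of Theorem 4.1: reduction from dictionary look-up with mismatches to text indexing with mismatches.) -/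
set_option linter.unusedSectionVars false
set_option linter.unusedVariables false

namespace HamAux
variable {α : Type*} [DecidableEq α]

lemma zip_append_right {u v w : List α} (h : u.length ≤ v.length) :
    u.zip (v ++ w) = u.zip v := by
  induction u generalizing v with
  | nil => simp
  | cons a u ih =>
    cases v with
    | nil => simp at h
    | cons b v =>
      have h' : u.length ≤ v.length := by simpa using h
      simp [ih h']

lemma zip_take_right {u v : List α} {n : ℕ} (h : u.length ≤ n) :
    u.zip (v.take n) = u.zip v := by
  induction u generalizing v n with
  | nil => simp
  | cons a u ih =>
    cases v with
    | nil => simp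
    | cons b v =>
      cases n with
      | zero => simp at h
      | succ n =>
        have h' : u.length ≤ n := by simpa using h
        simp [ih h']

lemma ham_append {u₁ u₂ v₁ v₂ : List α} (h : u₁.length = v₁.length) :
    hammingL (u₁ ++ u₂) (v₁ ++ v₂) = hammingL u₁ v₁ + hammingL u₂ v₂ := by
  unfold hammingL
  rw [List.zip_append h, List.countP_append]

lemma ham_append_right {u v w : List α} (h : u.length ≤ v.length) :
    hammingL u (v ++ w) = hammingL u v := by
  unfold hammingL; rw [zip_append_right h]

lemma ham_take_right {u v : List α} {n : ℕ} (h : u.length ≤ n) :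
    hammingL u (v.take n) = hammingL u v := by
  unfold hammingL; rw [zip_take_right h]

lemma ham_comm (u v : List α) : hammingL u v = hammingL v u := by
  unfold hammingL
  rw [← List.zip_swap v u, List.countP_map]
  congr 1
  funext p
  simp [ne_comm, eq_comm]

lemma ham_self (u : List α) : hammingL u u = 0 := by
  induction u with
  | nil => rfl
  | cons a u ih => simpa [hammingL] using ih

lemma ham_disjoint {A B : Set α} (hAB : Disjoint A B) {u v : List α}
    (hu : ∀ x ∈ u, x ∈ A) (hv : ∀ x ∈ v, x ∈ B) :
    hammingL u v = min u.length v.length := by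
  unfold hammingL
  rw [List.countP_eq_length.mpr, List.length_zip]
  rintro ⟨a, b⟩ hab
  have hm := List.of_mem_zip hab
  simp only [decide_eq_true_eq, ne_eq]
  intro hEq
  exact (Set.disjoint_left.mp hAB (hu a hm.1)) (hEq ▸ hv b hm.2)

lemma dropBlocks {d : ℕ} {G : List α} (hG : G.length = 2*d) :
    ∀ (q : ℕ) (L : List (List α)), q ≤ L.length → (∀ l ∈ L, l.length = d) →
    (G ++ (L.map (· ++ G)).flatten).drop (3*d*q) =
      G ++ ((L.drop q).map (· ++ G)).flatten := by
  intro q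
  induction q with
  | zero => intro L _ _; simp
  | succ q ih =>
    intro L hq hL
    cases L with
    | nil => simp at hq
    | cons l L' =>
      have hl : l.length = d := hL l (by simp)
      have h3 : 3*d*(q+1) = 3*d + 3*d*q := by ring
      rw [h3, ← List.drop_drop]
      have h1 : G ++ ((l :: L').map (· ++ G)).flatten
          = (G ++ l) ++ (G ++ (L'.map (· ++ G)).flatten) := by
        simp [List.append_assoc]
      rw [h1, List.drop_left' (by simp [hG, hl]; ring),
        ih L' (by simpa using hq) (fun x hx => hL x (by simp [hx]))]
      simp

end HamAux

/-- Combinatorial core of Theorem 4.1 (reduction from dictionary look-up with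
mismatches to text indexing with mismatches).  Let `A, B` be disjoint sets,
`G` a gap string of length `2d` over `A` satisfying the gap property, the
dictionary strings `S 0, …, S (N-1)` and the query `Q` length-`d` strings over
`B`, and `T = G ++ S 0 ++ G ++ ⋯ ++ S (N-1) ++ G`.  If the length-`5d` window
of `T` starting at position `p` is at Hamming distance `< d` from
`G ++ Q ++ G`, then this window equals `G ++ S i ++ G` for some `i`
(equivalently `p = 3d·i`), and the Hamming distance between `Q` and `S i` is
at most that between `G ++ Q ++ G` and the window. -/
theorem text_indexing_mismatches_core {α : Type*} [DecidableEq α]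
    (A B : Set α) (hAB : Disjoint A B)
    (d : ℕ) (hd : 1 ≤ d)
    (G : List α) (hGlen : G.length = 2 * d) (hGA : ∀ x ∈ G, x ∈ A)
    (hGap : ∀ (i : ℕ) (_h1 : 3 * d ≤ 2 * i) (_h2 : i < 2 * d),
      d + 2 ≤ 2 * hammingL (G.take i) (G.drop (2 * d - i)))
    (N : ℕ) (hN : 1 ≤ N) (S : Fin N → List α)
    (hSlen : ∀ i, (S i).length = d) (hSB : ∀ i, ∀ x ∈ S i, x ∈ B)
    (Q : List α) (hQlen : Q.length = d) (hQB : ∀ x ∈ Q, x ∈ B)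
    (T : List α) (hT : T = G ++ (List.ofFn fun i => S i ++ G).flatten)
    (p : ℕ) (hp : p + 5 * d ≤ T.length)
    (hclose : hammingL (G ++ Q ++ G) ((T.drop p).take (5 * d)) < d) :
    ∃ i : Fin N,
      (T.drop p).take (5 * d) = G ++ S i ++ G ∧
      p = 3 * d * (i : ℕ) ∧
      hammingL Q (S i) ≤ hammingL (G ++ Q ++ G) ((T.drop p).take (5 * d)) := by
  have hd3 : 0 < 3*d := by omega
  obtain ⟨q, r, hrlt, hpqr⟩ : ∃ q r, r < 3*d ∧ p = 3*d*q + r :=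
    ⟨p / (3*d), p % (3*d), Nat.mod_lt _ hd3, (Nat.div_add_mod p (3*d)).symm⟩
  set L := List.ofFn S with hL
  have hLlen : L.length = N := by simp [hL]
  have hLd : ∀ l ∈ L, l.length = d := by
    intro l hl
    obtain ⟨i, hi⟩ := List.mem_ofFn.mp hl
    rw [← hi]; exact hSlen i
  have hTQ : T = G ++ (L.map (· ++ G)).flatten := by
    rw [hT, hL, List.map_ofFn]; rfl
  have hTlen : T.length = 2*d + N*(3*d) := by
    rw [hTQ]
    simp only [List.length_append, List.length_flatten, List.map_map, hGlen]
    congr 1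
    have h5 : List.map (List.length ∘ (· ++ G)) L = List.replicate N (3*d) := by
      rw [List.eq_replicate_iff]
      constructor
      · simp [hLlen]
      · intro b hb
        simp only [List.mem_map] at hb
        obtain ⟨l, hl, rfl⟩ := hb
        simp [Function.comp, hLd l hl, hGlen]; ring
    rw [h5, List.sum_replicate, smul_eq_mul]
  have hp' : 3*d*q + r + 5*d ≤ 2*d + N*(3*d) := by
    rw [← hTlen, ← hpqr]; exact hp
  rcases Nat.eq_zero_or_pos r with hr0 | hr1
  · -- r = 0 : the window is exactly G ++ S q ++ G
    have hqN : q < N := by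
      by_contra h
      push_neg at h
      have h2 : 3*d*N ≤ 3*d*q := Nat.mul_le_mul_left _ h
      have h3 : N*(3*d) = 3*d*N := by ring
      rw [h3] at hp'
      linarith
    set iq : Fin N := ⟨q, hqN⟩ with hiq
    have hdropT := HamAux.dropBlocks hGlen q L (by omega) hLd
    have hcons : L.drop q = S iq :: L.drop (q+1) := by
      rw [List.drop_eq_getElem_cons (by omega)]
      congr 1
      simp [hL, hiq]
    have hW : T.drop p = (G ++ S iq ++ G) ++ ((L.drop (q+1)).map (· ++ G)).flatten := by
      rw [hpqr, hr0, Nat.add_zero, hTQ, hdropT, hcons]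
      simp [List.append_assoc]
    have hwlen : (G ++ S iq ++ G).length = 5*d := by
      simp [hGlen, hSlen]; omega
    have hwin : (T.drop p).take (5*d) = G ++ S iq ++ G := by
      rw [hW, List.take_left' hwlen]
    refine ⟨iq, hwin, ?_, ?_⟩
    · have : (iq : ℕ) = q := rfl
      rw [this, hpqr, hr0]
      exact Nat.add_zero _
    · rw [hwin, HamAux.ham_append (by simp [hGlen, hQlen, hSlen]),
        HamAux.ham_append rfl]
      simp [HamAux.ham_self]
  · -- r ≥ 1 : contradiction
    exfalso
    have hqN2 : q + 2 ≤ N := by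
      by_contra h
      push_neg at h
      have h2 : 3*d*N ≤ 3*d*(q+1) := Nat.mul_le_mul_left _ (by omega)
      have h3 : 3*d*(q+1) = 3*d*q + 3*d := by ring
      have h4 : N*(3*d) = 3*d*N := by ring
      rw [h4] at hp'
      linarith
    set iq : Fin N := ⟨q, by omega⟩ with hiq
    set iq1 : Fin N := ⟨q+1, by omega⟩ with hiq1
    set rest := ((L.drop (q+2)).map (· ++ G)).flatten with hrest
    have hdropT := HamAux.dropBlocks hGlen q L (by omega) hLd
    have hq1 : q < L.length := by omega
    have hq2 : q + 1 < L.length := by omega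
    have hcons : L.drop q = S iq :: S iq1 :: L.drop (q+2) := by
      rw [List.drop_eq_getElem_cons hq1, List.drop_eq_getElem_cons hq2]
      congr 1
      · simp [hL, hiq]
      · congr 1
        simp [hL, hiq1]
    have hW0 : T.drop p = (G ++ (S iq ++ (G ++ (S iq1 ++ (G ++ rest))))).drop r := by
      rw [hpqr, ← List.drop_drop, hTQ, hdropT, hcons]
      simp [List.append_assoc, hrest]
    have hplen : (G ++ Q ++ G).length ≤ 5*d := by simp [hGlen, hQlen]; omega
    have hclose' : hammingL (G ++ Q ++ G) (T.drop p) < d := by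
      rw [← HamAux.ham_take_right (v := T.drop p) hplen]
      exact hclose
    -- three subcases on r
    rcases le_or_gt r d with hrd | hrd
    · -- 1 ≤ r ≤ d
      have hWA : T.drop p = G.drop r ++ (S iq ++ (G ++ (S iq1 ++ (G ++ rest)))) := by
        rw [hW0, List.drop_append_of_le_length (by rw [hGlen]; omega)]
      have hP : G.take (2*d-r) ++ (G.drop (2*d-r) ++ (Q.take (d-r) ++ (Q.drop (d-r)
          ++ (G.take (2*d-r) ++ G.drop (2*d-r))))) = G ++ Q ++ G := by
        rw [← List.append_assoc (G.take (2*d-r)) (G.drop (2*d-r)),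
          List.take_append_drop,
          ← List.append_assoc (Q.take (d-r)) (Q.drop (d-r)),
          List.take_append_drop]
        exact (List.append_assoc G Q G).symm
      have hWs : G.drop r ++ ((S iq).take r ++ ((S iq).drop r ++ (G.take r ++ (G.drop r
          ++ (S iq1 ++ (G ++ rest)))))) = T.drop p := by
        rw [hWA, ← List.append_assoc ((S iq).take r) ((S iq).drop r),
          List.take_append_drop,
          ← List.append_assoc (G.take r) (G.drop r),
          List.take_append_drop]
      rw [← hP, ← hWs,
        HamAux.ham_append (u₁ := G.take (2*d-r)) (v₁ := G.drop r)
          (by simp [hGlen] <;> omega),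
        HamAux.ham_append (u₁ := G.drop (2*d-r)) (v₁ := (S iq).take r)
          (by simp [hGlen, hSlen] <;> omega),
        HamAux.ham_append (u₁ := Q.take (d-r)) (v₁ := (S iq).drop r)
          (by simp [hQlen, hSlen] <;> omega),
        HamAux.ham_append (u₁ := Q.drop (d-r)) (v₁ := G.take r)
          (by simp [hQlen, hGlen] <;> omega),
        HamAux.ham_append (u₁ := G.take (2*d-r)) (v₁ := G.drop r)
          (by simp [hGlen] <;> omega)] at hclose'
      have he2 : hammingL (G.drop (2*d-r)) ((S iq).take r)
          = min (G.drop (2*d-r)).length ((S iq).take r).length :=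
        HamAux.ham_disjoint hAB (fun x hx => hGA x (List.mem_of_mem_drop hx))
          (fun x hx => hSB iq x (List.mem_of_mem_take hx))
      have he4 : hammingL (Q.drop (d-r)) (G.take r)
          = min (G.take r).length (Q.drop (d-r)).length := by
        rw [HamAux.ham_comm]
        exact HamAux.ham_disjoint hAB (fun x hx => hGA x (List.mem_of_mem_take hx))
          (fun x hx => hQB x (List.mem_of_mem_drop hx))
      have he6 : hammingL (G.drop (2*d-r)) (S iq1 ++ (G ++ rest))
          = min (G.drop (2*d-r)).length (S iq1).length := by
        rw [HamAux.ham_append_right (by simp [hGlen, hSlen] <;> omega)]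
        exact HamAux.ham_disjoint hAB (fun x hx => hGA x (List.mem_of_mem_drop hx))
          (fun x hx => hSB iq1 x hx)
      simp only [List.length_drop, List.length_take, hGlen, hQlen, hSlen]
        at he2 he4 he6
      by_cases h2r : 2*r ≤ d
      · have hg := hGap (2*d - r) (by omega) (by omega)
        rw [show 2*d - (2*d - r) = r by omega] at hg
        omega
      · omega
    · rcases le_or_gt r (2*d) with hr2d | hr2d
      · -- d < r ≤ 2d
        have hWA : T.drop p = G.drop r ++ (S iq ++ (G ++ (S iq1 ++ (G ++ rest)))) := by
          rw [hW0, List.drop_append_of_le_length (by rw [hGlen]; omega)]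
        have hP : G.take (2*d-r) ++ ((G.drop (2*d-r)).take d ++ ((G.drop (2*d-r)).drop d
            ++ (Q ++ G))) = G ++ Q ++ G := by
          rw [← List.append_assoc ((G.drop (2*d-r)).take d) ((G.drop (2*d-r)).drop d),
            List.take_append_drop,
            ← List.append_assoc (G.take (2*d-r)) (G.drop (2*d-r)),
            List.take_append_drop]
          exact (List.append_assoc G Q G).symm
        rw [← hP, hWA,
          HamAux.ham_append (u₁ := G.take (2*d-r)) (v₁ := G.drop r)
            (by simp [hGlen] <;> omega),
          HamAux.ham_append (u₁ := (G.drop (2*d-r)).take d) (v₁ := S iq)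
            (by simp [hGlen, hSlen] <;> omega)] at hclose'
        have he2 : hammingL ((G.drop (2*d-r)).take d) (S iq)
            = min ((G.drop (2*d-r)).take d).length (S iq).length :=
          HamAux.ham_disjoint hAB
            (fun x hx => hGA x (List.mem_of_mem_drop (List.mem_of_mem_take hx)))
            (fun x hx => hSB iq x hx)
        simp only [List.length_take, List.length_drop, hGlen, hSlen] at he2
        omega
      · -- 2d < r < 3d
        have hr2 : r - 2*d ≤ d := by omega
        have hWC : T.drop p = (S iq).drop (r - 2*d) ++ (G ++ (S iq1 ++ (G ++ rest))) := by
          rw [hW0, show r = 2*d + (r - 2*d) by omega, ← List.drop_drop,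
            List.drop_left' hGlen,
            List.drop_append_of_le_length (by rw [hSlen]; omega),
            show 2*d + (r - 2*d) - 2*d = r - 2*d by omega]
        set r' := 3*d - r with hr'
        have hP : G.take r' ++ (G.drop r' ++ (Q.take r' ++ (Q.drop r'
            ++ (G.take r' ++ G.drop r')))) = G ++ Q ++ G := by
          rw [← List.append_assoc (G.take r') (G.drop r'),
            List.take_append_drop,
            ← List.append_assoc (Q.take r') (Q.drop r'),
            List.take_append_drop]
          exact (List.append_assoc G Q G).symm
        have hWs : (S iq).drop (r - 2*d) ++ (G.take (2*d-r') ++ (G.drop (2*d-r')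
            ++ ((S iq1).take (d-r') ++ ((S iq1).drop (d-r') ++ (G ++ rest)))))
            = T.drop p := by
          rw [hWC, ← List.append_assoc (G.take (2*d-r')) (G.drop (2*d-r')),
            List.take_append_drop,
            ← List.append_assoc ((S iq1).take (d-r')) ((S iq1).drop (d-r')),
            List.take_append_drop]
        rw [← hP, ← hWs,
          HamAux.ham_append (u₁ := G.take r') (v₁ := (S iq).drop (r - 2*d))
            (by simp [hGlen, hSlen] <;> omega),
          HamAux.ham_append (u₁ := G.drop r') (v₁ := G.take (2*d-r'))
            (by simp [hGlen] <;> omega),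
          HamAux.ham_append (u₁ := Q.take r') (v₁ := G.drop (2*d-r'))
            (by simp [hQlen, hGlen] <;> omega),
          HamAux.ham_append (u₁ := Q.drop r') (v₁ := (S iq1).take (d-r'))
            (by simp [hQlen, hSlen] <;> omega),
          HamAux.ham_append (u₁ := G.take r') (v₁ := (S iq1).drop (d-r'))
            (by simp [hGlen, hSlen] <;> omega)] at hclose'
        have he1 : hammingL (G.take r') ((S iq).drop (r - 2*d))
            = min (G.take r').length ((S iq).drop (r - 2*d)).length :=
          HamAux.ham_disjoint hAB (fun x hx => hGA x (List.mem_of_mem_take hx))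
            (fun x hx => hSB iq x (List.mem_of_mem_drop hx))
        have he3 : hammingL (Q.take r') (G.drop (2*d-r'))
            = min (G.drop (2*d-r')).length (Q.take r').length := by
          rw [HamAux.ham_comm]
          exact HamAux.ham_disjoint hAB (fun x hx => hGA x (List.mem_of_mem_drop hx))
            (fun x hx => hQB x (List.mem_of_mem_take hx))
        have he5 : hammingL (G.take r') ((S iq1).drop (d-r'))
            = min (G.take r').length ((S iq1).drop (d-r')).length :=
          HamAux.ham_disjoint hAB (fun x hx => hGA x (List.mem_of_mem_take hx))
            (fun x hx => hSB iq1 x (List.mem_of_mem_drop hx))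
        have he6 : hammingL (G.drop r') (G ++ rest)
            = hammingL (G.drop r') (G.take (2*d-r')) := by
          rw [HamAux.ham_append_right (by simp [hGlen] <;> omega),
            ← HamAux.ham_take_right (v := G) (n := 2*d-r') (by simp [hGlen] <;> omega)]
        have hcm : hammingL (G.drop r') (G.take (2*d-r'))
            = hammingL (G.take (2*d-r')) (G.drop r') := HamAux.ham_comm _ _
        simp only [List.length_take, List.length_drop, hGlen, hQlen, hSlen]
          at he1 he3 he5
        rw [he6, hcm] at hclose'
        by_cases h2r : 2*r' ≤ d
        · have hg := hGap (2*d - r') (by omega) (by omega)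
          rw [show 2*d - (2*d - r') = r' by omega] at hg
          omega
        · omega
end
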